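/- arXiv:2410.17254 — 3 statements merged into one kernel-verified Lean document; each statement's English description precedes it below -/
import Mathlib

section
/- Let d ∈ ℕ and c > 0. Then there exists q > 0 such that every set Θ ⊆ ℝ^d which has Nagata dimension at most d−1 with constant c is q-porous. -/
/-!
Suppose every point of a cube `Q` of half-side `s` were within `δ` of `Θ`. Put a fine grid on
`Q`, attach to each grid point a nearby point of `Θ`, and colour the grid point by the index `i`
of the family `𝒰 i` of the Nagata cover containing that point. A discrete Lebesgue covering
theorem gives a colour `i` and a chain of adjacent grid points of colour `i` joining the two faces
of `Q` orthogonal to the `i`-th axis. Consecutive points of `Θ` along the chain are closer than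
`c s`, so by separation they all lie in one set of `𝒰 i`, whose diameter is at most `s`; yet
the two ends of the chain are at least `2 s - 2 δ` apart. Hence `Q` contains a point at distance
`≥ δ` from `Θ` once `2 δ < min 1 c * s`, which is porosity.

The covering theorem is reduced to a discrete Poincaré–Miranda theorem, and that one to
Sperner's lemma on Kuhn's triangulation of the cube, proved by the parity (door) argument with
induction on the dimension.
-/

open Set
open scoped ENNReal

/-- `Θ` has Nagata dimension at most `n` with constant `c`: for every `s > 0` there is an
`s`-cover of `Θ` consisting of `n+1` collections `𝒰₀, …, 𝒰ₙ`, each of which is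
`cs`-separated. -/
def NagataDimLE {d : ℕ} (Θ : Set (EuclideanSpace ℝ (Fin d))) (n : ℕ) (c : ℝ) : Prop :=
  ∀ s : ℝ, 0 < s →
    ∃ 𝒰 : Fin (n + 1) → Set (Set (EuclideanSpace ℝ (Fin d))),
      (Θ ⊆ ⋃ i, ⋃₀ 𝒰 i) ∧
      (∀ i, ∀ U ∈ 𝒰 i, EMetric.diam U ≤ ENNReal.ofReal s) ∧
      (∀ i, ∀ U ∈ 𝒰 i, ∀ V ∈ 𝒰 i, U ≠ V → ∀ p ∈ U, ∀ q ∈ V, c * s ≤ dist p q)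

/-- `Θ` is `q`-porous: every point of `Θ` is a `q`-porosity point, i.e. for every `r > 0`
there is a ball of radius `qr` contained in `B_r(x) \ Θ`. -/
def QPorous {d : ℕ} (q : ℝ) (Θ : Set (EuclideanSpace ℝ (Fin d))) : Prop :=
  ∀ x ∈ Θ, ∀ r : ℝ, 0 < r →
    ∃ y : EuclideanSpace ℝ (Fin d), Metric.ball y (q * r) ⊆ Metric.ball x r \ Θ

open Finset

theorem Finset.natCast_card_eq_card_filter_fixed {α : Type*} [DecidableEq α] {s : Finset α}
    (g : α → α) (hg : ∀ a ∈ s, g a ∈ s) (hgg : ∀ a ∈ s, g (g a) = a) :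
    (#s : ZMod 2) = #{a ∈ s | g a = a} := by
  have hmoved : ∑ a ∈ s, (if g a = a then 0 else 1 : ZMod 2) = 0 := by
    refine sum_involution (fun a _ => g a) (fun a ha => ?_) (fun a _ h hfix => ?_)
      (fun a ha => hg a ha) (fun a ha => hgg a ha)
    · by_cases h : g a = a
      · simp [h]
      · rw [if_neg h, if_neg fun h' => h ((hgg a ha).symm.trans h').symm]
        decide
    · simp [hfix] at h
  calc (#s : ZMod 2) = ∑ a ∈ s, ((if g a = a then 1 else 0) + if g a = a then 0 else 1) := by
        simp only [apply_ite₂ (· + ·), add_zero, zero_add, ite_self, sum_const, nsmul_one]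
    _ = #{a ∈ s | g a = a} := by rw [sum_add_distrib, hmoved, add_zero, natCast_card_filter]

section Omitting

variable {ι κ : Type*} [Fintype ι] [DecidableEq ι] [Fintype κ] [DecidableEq κ] {f : ι → κ}

theorem filter_omitting_eq_singleton (hf : Function.Bijective f) (j₀ : ι) :
    ({j | ∀ m ≠ f j₀, ∃ j' ≠ j, f j' = m} : Finset ι) = {j₀} := by
  ext j
  simp only [mem_filter, Finset.mem_univ, true_and, Finset.mem_singleton]
  refine ⟨fun hj => by_contra fun hne => ?_, ?_⟩
  · obtain ⟨j', hj', hf'⟩ := hj (f j) (hf.1.ne hne)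
    exact hj' (hf.1 hf')
  · rintro rfl m hm
    obtain ⟨j', rfl⟩ := hf.2 m
    exact ⟨j', fun h => hm (h ▸ rfl), rfl⟩

/-- Away from `j`, `f` is a bijection onto the complement of `z`, so the only other point with
the same property is the second preimage `j₁` of `f j`. -/
theorem exists_filter_omitting_eq_pair (hcard : Fintype.card ι = Fintype.card κ) {z : κ}
    (hz : ∀ i, f i ≠ z) {j : ι} (hj : ∀ m ≠ z, ∃ j' ≠ j, f j' = m) :
    ∃ j₁ ≠ j, ({i | ∀ m ≠ z, ∃ i' ≠ i, f i' = m} : Finset ι) = {j, j₁} := by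
  have hinj : ∀ j₁ j₂, j₁ ≠ j → j₂ ≠ j → f j₁ = f j₂ → j₁ = j₂ := by
    let g : {i // i ≠ j} → {m // m ≠ z} := fun i => ⟨f i, hz i⟩
    have hg : Function.Surjective g := fun ⟨m, hm⟩ =>
      let ⟨i, hi, hfi⟩ := hj m hm; ⟨⟨i, hi⟩, Subtype.ext hfi⟩
    have hg' := ((Fintype.bijective_iff_surjective_and_card g).mpr
      ⟨hg, by simp [Fintype.card_subtype_compl, hcard]⟩).1
    exact fun j₁ j₂ h₁ h₂ h => congrArg Subtype.val (@hg' ⟨j₁, h₁⟩ ⟨j₂, h₂⟩ (Subtype.ext h))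
  obtain ⟨j₁, hj₁, hfj₁⟩ := hj (f j) (hz j)
  refine ⟨j₁, hj₁, ?_⟩
  ext i
  simp only [mem_filter, Finset.mem_univ, true_and, Finset.mem_insert, Finset.mem_singleton]
  refine ⟨fun hi => ?_, ?_⟩
  · by_contra! hne
    obtain ⟨i', hi', hfi'⟩ := hi (f i) (hz i)
    rcases eq_or_ne i' j with rfl | hi'j
    · exact hne.2 (hinj i j₁ hne.1 hj₁ (hfi'.symm.trans hfj₁.symm))
    · exact hi' (hinj i' i hi'j hne.1 hfi')
  · rintro (rfl | rfl)
    · exact hj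
    · intro m hm
      obtain ⟨i', hi', hfi'⟩ := hj m hm
      by_cases hi'i : i' = i
      · exact ⟨j, hj₁.symm, by rw [← hfi', hi'i, hfj₁]⟩
      · exact ⟨i', hi'i, hfi'⟩

theorem natCast_card_filter_omitting (hcard : Fintype.card ι = Fintype.card κ) (z : κ) :
    (#{j | ∀ m ≠ z, ∃ j' ≠ j, f j' = m} : ZMod 2) = if Function.Surjective f then 1 else 0 := by
  by_cases hsurj : Function.Surjective f
  · have hf := (Fintype.bijective_iff_surjective_and_card f).mpr ⟨hsurj, hcard⟩
    obtain ⟨j₀, rfl⟩ := hsurj z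
    simp [filter_omitting_eq_singleton hf j₀, hsurj]
  rw [if_neg hsurj]
  rcases em (∃ j, ∀ m ≠ z, ∃ j' ≠ j, f j' = m) with ⟨j, hj⟩ | hnone
  · have hz : ∀ i, f i ≠ z := fun i hi =>
      hsurj fun m => if hm : m = z then ⟨i, hm ▸ hi⟩ else (hj m hm).imp fun _ => And.right
    obtain ⟨j₁, hj₁, hpair⟩ := exists_filter_omitting_eq_pair hcard hz hj
    rw [hpair, card_pair hj₁.symm]
    decide
  · simp only [not_exists] at hnone
    simp [filter_false_of_mem fun j _ => hnone j]

end Omitting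

abbrev GridPoint (k M : ℕ) := Fin k → Fin (M + 1)

def GridAdj {k M : ℕ} (x y : GridPoint k M) : Prop :=
  ∀ i, (x i : ℕ) ≤ y i + 1 ∧ (y i : ℕ) ≤ x i + 1

/-- A simplex of Kuhn's triangulation of the cube `[0, M]^k`: its vertices are
`base, base + e (perm 0), base + e (perm 0) + e (perm 1), …`. -/
@[ext]
structure KuhnSimplex (k M : ℕ) where
  base : Fin k → Fin M
  perm : Equiv.Perm (Fin k)

namespace KuhnSimplex

variable {k M : ℕ}

instance : Fintype (KuhnSimplex k M) :=
  Fintype.ofEquiv ((Fin k → Fin M) × Equiv.Perm (Fin k))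
    ⟨fun p => ⟨p.1, p.2⟩, fun s => (s.base, s.perm), fun _ => rfl, fun _ => rfl⟩

def vertex (s : KuhnSimplex k M) (j : Fin (k + 1)) : GridPoint k M := fun i =>
  ⟨s.base i + if (s.perm.symm i : ℕ) < j then 1 else 0, by
    have := (s.base i).isLt; split <;> omega⟩

theorem vertex_val (s : KuhnSimplex k M) (j : Fin (k + 1)) (i : Fin k) :
    (s.vertex j i : ℕ) = s.base i + if (s.perm.symm i : ℕ) < j then 1 else 0 := rfl

theorem gridAdj_vertex (s : KuhnSimplex k M) (j j' : Fin (k + 1)) :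
    GridAdj (s.vertex j) (s.vertex j') := fun i => by
  simp only [vertex_val]
  constructor <;> split <;> split <;> omega

section Pivot

variable (s : KuhnSimplex (k + 1) M)

/-- Exchange the steps `j - 1` and `j`; this replaces vertex `j` only. -/
def swapAt (j : Fin (k + 2)) (h0 : j ≠ 0) (hl : j ≠ Fin.last _) : KuhnSimplex (k + 1) M :=
  ⟨s.base, (Equiv.swap (j.pred h0) (j.castPred hl)).trans s.perm⟩

/-- Drop vertex `0` and append a vertex one step beyond the last one. -/
def shiftUp (h : (s.base (s.perm 0) : ℕ) + 1 < M) : KuhnSimplex (k + 1) M :=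
  ⟨Function.update s.base (s.perm 0) ⟨s.base (s.perm 0) + 1, h⟩, (finRotate _).trans s.perm⟩

/-- Drop the last vertex and prepend a vertex one step before vertex `0` (meaningful only when
`s.base (s.perm (Fin.last k)) ≠ 0`; otherwise the subtraction truncates). -/
def shiftDown : KuhnSimplex (k + 1) M :=
  ⟨Function.update s.base (s.perm (Fin.last k))
      ⟨s.base (s.perm (Fin.last k)) - 1, by have := (s.base (s.perm (Fin.last k))).isLt; omega⟩,
    (finRotate _).symm.trans s.perm⟩

variable {s}

theorem vertex_swapAt {j l : Fin (k + 2)} (h0 : j ≠ 0) (hl : j ≠ Fin.last _) (hlj : l ≠ j) :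
    (s.swapAt j h0 hl).vertex l = s.vertex l := by
  funext i
  apply Fin.ext
  have hl' : (l : ℕ) ≠ j := Fin.val_ne_of_ne hlj
  have hj0 : (j : ℕ) ≠ 0 := Fin.val_ne_zero_iff.mpr h0
  have hpred : ((j.pred h0 : Fin (k + 1)) : ℕ) = j - 1 := Fin.val_pred _ _
  have hcast : ((j.castPred hl : Fin (k + 1)) : ℕ) = j := Fin.coe_castPred _ _
  have hswap : (Equiv.swap (j.pred h0) (j.castPred hl) (s.perm.symm i) : ℕ) < l ↔
      (s.perm.symm i : ℕ) < l := by
    rcases eq_or_ne (s.perm.symm i) (j.pred h0) with ht | hta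
    · rw [ht, Equiv.swap_apply_left, hpred, hcast]; omega
    rcases eq_or_ne (s.perm.symm i) (j.castPred hl) with ht | htb
    · rw [ht, Equiv.swap_apply_right, hpred, hcast]; omega
    · rw [Equiv.swap_apply_of_ne_of_ne hta htb]
  simp only [vertex_val, swapAt, Equiv.symm_trans_apply, Equiv.symm_swap, hswap]

theorem swapAt_swapAt {j : Fin (k + 2)} (h0 : j ≠ 0) (hl : j ≠ Fin.last _) :
    (s.swapAt j h0 hl).swapAt j h0 hl = s := by
  ext1
  · rfl
  · ext x; simp [swapAt]

theorem swapAt_ne {j : Fin (k + 2)} (h0 : j ≠ 0) (hl : j ≠ Fin.last _) : s.swapAt j h0 hl ≠ s := by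
  intro h
  have := congrArg (fun t : KuhnSimplex (k + 1) M => t.perm.symm (s.perm (j.pred h0))) h
  simp only [swapAt, Equiv.symm_trans_apply, Equiv.symm_apply_apply, Equiv.symm_swap,
    Equiv.swap_apply_left] at this
  have := congrArg Fin.val this
  rw [Fin.val_pred, Fin.coe_castPred] at this
  have := Fin.val_ne_zero_iff.mpr h0
  omega

theorem shiftUp_base_apply (h : (s.base (s.perm 0) : ℕ) + 1 < M) (i : Fin (k + 1)) :
    ((s.shiftUp h).base i : ℕ) = s.base i + if i = s.perm 0 then 1 else 0 := by
  by_cases hi : i = s.perm 0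
  · subst hi; simp [shiftUp]
  · simp [shiftUp, hi]

theorem shiftDown_base_apply (i : Fin (k + 1)) :
    (s.shiftDown.base i : ℕ) = s.base i - if i = s.perm (Fin.last k) then 1 else 0 := by
  by_cases hi : i = s.perm (Fin.last k)
  · subst hi; simp [shiftDown]
  · simp [shiftDown, hi]

theorem shiftUp_perm_last (h : (s.base (s.perm 0) : ℕ) + 1 < M) :
    (s.shiftUp h).perm (Fin.last k) = s.perm 0 := by
  simp [shiftUp]

theorem shiftDown_perm_zero : s.shiftDown.perm 0 = s.perm (Fin.last k) := by
  simp only [shiftDown, Equiv.trans_apply]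
  rw [(finRotate _).symm_apply_eq.mpr (finRotate_last (n := k)).symm]

theorem shiftDown_shiftUp (h : (s.base (s.perm 0) : ℕ) + 1 < M) :
    (s.shiftUp h).shiftDown = s := by
  ext1
  · funext i
    apply Fin.ext
    rw [shiftDown_base_apply, shiftUp_perm_last, shiftUp_base_apply]
    split_ifs <;> simp
  · ext x; simp [shiftDown, shiftUp]

theorem shiftUp_shiftDown (h : (s.base (s.perm (Fin.last k)) : ℕ) ≠ 0)
    (h' : (s.shiftDown.base (s.shiftDown.perm 0) : ℕ) + 1 < M) :
    s.shiftDown.shiftUp h' = s := by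
  ext1
  · funext i
    apply Fin.ext
    rw [shiftUp_base_apply, shiftDown_perm_zero, shiftDown_base_apply]
    split_ifs with hi
    · subst hi; omega
    · simp
  · ext x; simp [shiftDown, shiftUp]

theorem vertex_shiftUp (h : (s.base (s.perm 0) : ℕ) + 1 < M) (l : Fin (k + 1)) :
    (s.shiftUp h).vertex l.castSucc = s.vertex l.succ := by
  funext i
  apply Fin.ext
  have hperm : (s.shiftUp h).perm.symm i = (finRotate _).symm (s.perm.symm i) := by
    simp [shiftUp]
  simp only [vertex_val, shiftUp_base_apply, hperm, Fin.val_castSucc, Fin.val_succ]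
  rcases Fin.eq_zero_or_eq_succ (s.perm.symm i) with hp | ⟨p, hp⟩
  · have hi : i = s.perm 0 := by rw [← hp, Equiv.apply_symm_apply]
    have hrot : (finRotate (k + 1)).symm 0 = Fin.last k :=
      (finRotate _).symm_apply_eq.mpr finRotate_last.symm
    have := l.isLt
    simp only [hp, hrot, if_pos hi, Fin.val_last, Fin.val_zero]
    split_ifs <;> omega
  · have hi : i ≠ s.perm 0 := fun hi =>
      Fin.succ_ne_zero p (by rw [← hp, hi, Equiv.symm_apply_apply])
    have hrot : (finRotate (k + 1)).symm p.succ = p.castSucc := by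
      rw [Equiv.symm_apply_eq]; ext; rw [coe_finRotate_of_ne_last (Fin.castSucc_lt_last p).ne]; simp
    simp only [hp, hrot, if_neg hi, Fin.val_castSucc, Fin.val_succ]
    split_ifs <;> omega

end Pivot

end KuhnSimplex

section CanonicalLabel

variable {k M : ℕ}

def topCoords (x : GridPoint k M) : Finset (Fin k) := {i | x i = Fin.last M}

def canonicalLabel (x : GridPoint k M) : Fin (k + 1) :=
  if h : (topCoords x).Nonempty then ((topCoords x).max' h).succ else 0

theorem canonicalLabel_eq_zero_iff {x : GridPoint k M} :
    canonicalLabel x = 0 ↔ ∀ i, x i ≠ Fin.last M := by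
  unfold canonicalLabel
  split_ifs with h
  · obtain ⟨i, hi⟩ := h
    simp only [Fin.succ_ne_zero, false_iff, not_forall, not_not]
    exact ⟨i, by simpa [topCoords] using hi⟩
  · exact iff_of_true rfl fun i hi => h ⟨i, by simpa [topCoords] using hi⟩

theorem canonicalLabel_eq_succ_iff {x : GridPoint k M} {i : Fin k} :
    canonicalLabel x = i.succ ↔ x i = Fin.last M ∧ ∀ j, x j = Fin.last M → j ≤ i := by
  unfold canonicalLabel
  split_ifs with h
  · simp [max'_eq_iff, topCoords]
  · refine iff_of_false (Fin.succ_ne_zero i).symm fun hi => h ⟨i, ?_⟩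
    simpa [topCoords] using hi.1

theorem canonicalLabel_cons (y : GridPoint k M) :
    canonicalLabel (Fin.cons (Fin.last M) y : GridPoint (k + 1) M) = (canonicalLabel y).succ := by
  have htop : topCoords (Fin.cons (Fin.last M) y : GridPoint (k + 1) M) =
      insert 0 ((topCoords y).image Fin.succ) := by
    ext i
    induction i using Fin.cases with
    | zero => simp [topCoords]
    | succ i => simp [topCoords, Fin.succ_ne_zero]
  rw [canonicalLabel, dif_pos (by rw [htop]; exact Finset.insert_nonempty _ _)]
  simp only [htop]
  by_cases h : (topCoords y).Nonempty
  · rw [max'_insert _ _ (h.image _), max'_image Fin.strictMono_succ.monotone _ (h.image _),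
      max_eq_right (Fin.zero_le _), canonicalLabel, dif_pos h]
  · rw [Finset.not_nonempty_iff_eq_empty] at h
    simp [h, canonicalLabel]

end CanonicalLabel

/-- Chosen so that the doors on the boundary of the cube are exactly the simplices of the face
`x 0 = M` that are fully labeled by `canonicalLabel` (see `card_isDoor_isBoundaryFacet`). -/
structure IsSpernerLabeling {k M : ℕ} (lab : GridPoint k M → Fin (k + 1)) : Prop where
  bottom : ∀ x i, x i = 0 → lab x ≠ i.succ
  top : ∀ x, (∃ i, x i = Fin.last M) → lab x = canonicalLabel x

theorem isSpernerLabeling_canonicalLabel {k M : ℕ} :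
    IsSpernerLabeling (canonicalLabel : GridPoint k (M + 1) → Fin (k + 1)) where
  bottom _ _ hx hlab := Fin.last_pos.ne (hx.symm.trans (canonicalLabel_eq_succ_iff.mp hlab).1)
  top _ _ := rfl

namespace KuhnSimplex

variable {k M : ℕ}

def IsFullyLabeled (lab : GridPoint k M → Fin (k + 1)) (s : KuhnSimplex k M) : Prop :=
  Function.Surjective fun j => lab (s.vertex j)

def IsDoor (lab : GridPoint k M → Fin (k + 1)) (s : KuhnSimplex k M) (j : Fin (k + 1)) : Prop :=
  ∀ m ≠ 0, ∃ j' ≠ j, lab (s.vertex j') = m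

instance (lab : GridPoint k M → Fin (k + 1)) (s : KuhnSimplex k M) :
    Decidable (s.IsFullyLabeled lab) := by
  unfold IsFullyLabeled; infer_instance

instance (lab : GridPoint k M → Fin (k + 1)) (s : KuhnSimplex k M) (j : Fin (k + 1)) :
    Decidable (s.IsDoor lab j) := by
  unfold IsDoor; infer_instance

theorem natCast_card_isDoor_eq_isFullyLabeled (lab : GridPoint k M → Fin (k + 1)) :
    (#{p : KuhnSimplex k M × Fin (k + 1) | p.1.IsDoor lab p.2} : ZMod 2) =
      #{s : KuhnSimplex k M | s.IsFullyLabeled lab} := by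
  rw [natCast_card_filter, Fintype.sum_prod_type, natCast_card_filter]
  refine sum_congr rfl fun s _ => ?_
  rw [← natCast_card_filter]
  convert natCast_card_filter_omitting (f := fun j => lab (s.vertex j)) rfl 0 <;> rfl

/-- A facet of a Kuhn simplex either lies on the boundary of the cube or is shared with exactly
one other simplex; `flipFacet` passes to that simplex and fixes boundary facets. -/
def flipFacet : KuhnSimplex (k + 1) M × Fin (k + 2) → KuhnSimplex (k + 1) M × Fin (k + 2)
  | (s, j) =>
    if h0 : j = 0 then
      if htop : (s.base (s.perm 0) : ℕ) + 1 < M then (s.shiftUp htop, Fin.last _) else (s, j)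
    else if hl : j = Fin.last _ then
      if (s.base (s.perm (Fin.last k)) : ℕ) ≠ 0 then (s.shiftDown, 0) else (s, j)
    else (s.swapAt j h0 hl, j)

def IsBoundaryFacet (s : KuhnSimplex (k + 1) M) (j : Fin (k + 2)) : Prop :=
  j = 0 ∧ (s.base (s.perm 0) : ℕ) + 1 = M ∨
    j = Fin.last _ ∧ (s.base (s.perm (Fin.last k)) : ℕ) = 0

instance (s : KuhnSimplex (k + 1) M) (j : Fin (k + 2)) : Decidable (s.IsBoundaryFacet j) := by
  unfold IsBoundaryFacet; infer_instance

variable {s : KuhnSimplex (k + 1) M}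

theorem flipFacet_zero_of_lt (h : (s.base (s.perm 0) : ℕ) + 1 < M) :
    flipFacet (s, 0) = (s.shiftUp h, Fin.last _) := by
  simp [flipFacet, h]

theorem flipFacet_zero_of_eq (h : (s.base (s.perm 0) : ℕ) + 1 = M) :
    flipFacet (s, 0) = (s, 0) := by
  simp [flipFacet, h]

theorem flipFacet_last_of_ne (h : (s.base (s.perm (Fin.last k)) : ℕ) ≠ 0) :
    flipFacet (s, Fin.last _) = (s.shiftDown, 0) := by
  simp [flipFacet, h]

theorem flipFacet_last_of_eq (h : (s.base (s.perm (Fin.last k)) : ℕ) = 0) :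
    flipFacet (s, Fin.last _) = (s, Fin.last _) := by
  simp [flipFacet, h]

theorem flipFacet_of_ne {j : Fin (k + 2)} (h0 : j ≠ 0) (hl : j ≠ Fin.last _) :
    flipFacet (s, j) = (s.swapAt j h0 hl, j) := by
  simp [flipFacet, h0, hl]

theorem shiftDown_base_perm_zero_lt (h : (s.base (s.perm (Fin.last k)) : ℕ) ≠ 0) :
    (s.shiftDown.base (s.shiftDown.perm 0) : ℕ) + 1 < M := by
  rw [shiftDown_perm_zero, shiftDown_base_apply, if_pos rfl]
  have := (s.base (s.perm (Fin.last k))).isLt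
  omega

theorem flipFacet_flipFacet (p : KuhnSimplex (k + 1) M × Fin (k + 2)) :
    flipFacet (flipFacet p) = p := by
  obtain ⟨s, j⟩ := p
  rcases eq_or_ne j 0 with rfl | h0
  · rcases Nat.lt_or_eq_of_le (s.base (s.perm 0)).isLt with htop | htop
    · have hbot : ((s.shiftUp htop).base ((s.shiftUp htop).perm (Fin.last k)) : ℕ) ≠ 0 := by
        simp [shiftUp_perm_last, shiftUp_base_apply]
      rw [flipFacet_zero_of_lt htop, flipFacet_last_of_ne hbot, shiftDown_shiftUp]
    · rw [flipFacet_zero_of_eq htop, flipFacet_zero_of_eq htop]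
  rcases eq_or_ne j (Fin.last _) with rfl | hl
  · rcases eq_or_ne (s.base (s.perm (Fin.last k)) : ℕ) 0 with hbot | hbot
    · rw [flipFacet_last_of_eq hbot, flipFacet_last_of_eq hbot]
    · rw [flipFacet_last_of_ne hbot, flipFacet_zero_of_lt (shiftDown_base_perm_zero_lt hbot),
        shiftUp_shiftDown hbot]
  · rw [flipFacet_of_ne h0 hl, flipFacet_of_ne h0 hl, swapAt_swapAt]

theorem flipFacet_eq_self_iff {j : Fin (k + 2)} :
    flipFacet (s, j) = (s, j) ↔ s.IsBoundaryFacet j := by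
  have hl0 : (Fin.last (k + 1) : Fin (k + 2)) ≠ 0 := Fin.last_pos.ne'
  rcases eq_or_ne j 0 with rfl | h0
  · rcases Nat.lt_or_eq_of_le (s.base (s.perm 0)).isLt with htop | htop
    · rw [flipFacet_zero_of_lt htop]
      simp [IsBoundaryFacet, hl0, htop.ne]
    · simpa [flipFacet_zero_of_eq htop, IsBoundaryFacet] using htop
  rcases eq_or_ne j (Fin.last _) with rfl | hl
  · rcases eq_or_ne (s.base (s.perm (Fin.last k)) : ℕ) 0 with hbot | hbot
    · simp [flipFacet_last_of_eq hbot, IsBoundaryFacet, hbot]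
    · rw [flipFacet_last_of_ne hbot]
      simp [IsBoundaryFacet, hl0.symm, hbot]
  · rw [flipFacet_of_ne h0 hl]
    simp [IsBoundaryFacet, h0, hl, swapAt_ne h0 hl]

variable (lab : GridPoint (k + 1) M → Fin (k + 2))

theorem IsDoor.swapAt {j : Fin (k + 2)} (hd : s.IsDoor lab j) (h0 : j ≠ 0)
    (hl : j ≠ Fin.last _) : (s.swapAt j h0 hl).IsDoor lab j := fun m hm => by
  obtain ⟨j', hj', hlab⟩ := hd m hm
  exact ⟨j', hj', by rwa [vertex_swapAt h0 hl hj']⟩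

theorem IsDoor.shiftUp (hd : s.IsDoor lab 0) (h : (s.base (s.perm 0) : ℕ) + 1 < M) :
    (s.shiftUp h).IsDoor lab (Fin.last _) := fun m hm => by
  obtain ⟨j', hj', hlab⟩ := hd m hm
  obtain ⟨l, rfl⟩ := Fin.exists_succ_eq.mpr hj'
  exact ⟨l.castSucc, (Fin.castSucc_lt_last l).ne, by rwa [vertex_shiftUp]⟩

theorem IsDoor.shiftDown (hd : s.IsDoor lab (Fin.last _))
    (h : (s.base (s.perm (Fin.last k)) : ℕ) ≠ 0) : s.shiftDown.IsDoor lab 0 := fun m hm => by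
  obtain ⟨j', hj', hlab⟩ := hd m hm
  obtain ⟨l, rfl⟩ := Fin.exists_castSucc_eq.mpr hj'
  refine ⟨l.succ, Fin.succ_ne_zero l, ?_⟩
  rwa [← vertex_shiftUp (shiftDown_base_perm_zero_lt h), shiftUp_shiftDown h]

theorem IsDoor.flipFacet {j : Fin (k + 2)} (hd : s.IsDoor lab j) :
    (flipFacet (s, j)).1.IsDoor lab (flipFacet (s, j)).2 := by
  rcases eq_or_ne j 0 with rfl | h0
  · rcases Nat.lt_or_eq_of_le (s.base (s.perm 0)).isLt with htop | htop
    · rw [flipFacet_zero_of_lt htop]; exact hd.shiftUp lab htop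
    · rwa [flipFacet_zero_of_eq htop]
  rcases eq_or_ne j (Fin.last _) with rfl | hl
  · rcases eq_or_ne (s.base (s.perm (Fin.last k)) : ℕ) 0 with hbot | hbot
    · rwa [flipFacet_last_of_eq hbot]
    · rw [flipFacet_last_of_ne hbot]; exact hd.shiftDown lab hbot
  · rw [flipFacet_of_ne h0 hl]; exact hd.swapAt lab h0 hl

theorem natCast_card_isDoor_eq_isBoundaryFacet :
    (#{p : KuhnSimplex (k + 1) M × Fin (k + 2) | p.1.IsDoor lab p.2} : ZMod 2) =
      #{p : KuhnSimplex (k + 1) M × Fin (k + 2) |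
        p.1.IsDoor lab p.2 ∧ p.1.IsBoundaryFacet p.2} := by
  classical
  rw [natCast_card_eq_card_filter_fixed flipFacet (fun p hp => ?_)
    (fun p _ => flipFacet_flipFacet p), filter_filter]
  · congr 2
    ext ⟨s, j⟩
    simp only [mem_filter, Finset.mem_univ, true_and]
    exact and_congr_right fun _ => flipFacet_eq_self_iff
  · simp only [mem_filter, Finset.mem_univ, true_and] at hp ⊢
    exact hp.flipFacet lab

/-- The simplex of `[0, M + 1]^(k + 1)` whose facet opposite vertex `0` is `t` placed on the
face `x 0 = M + 1`. -/
def liftTop (t : KuhnSimplex k (M + 1)) : KuhnSimplex (k + 1) (M + 1) :=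
  ⟨Fin.cons (Fin.last M) t.base, Equiv.Perm.decomposeFin.symm (0, t.perm)⟩

theorem liftTop_perm_zero (t : KuhnSimplex k (M + 1)) : t.liftTop.perm 0 = 0 :=
  Equiv.Perm.decomposeFin_symm_apply_zero _ _

theorem liftTop_perm_succ (t : KuhnSimplex k (M + 1)) (i : Fin k) :
    t.liftTop.perm i.succ = (t.perm i).succ := by
  simp [liftTop, Equiv.Perm.decomposeFin_symm_apply_succ]

theorem vertex_liftTop (t : KuhnSimplex k (M + 1)) (j : Fin (k + 1)) :
    t.liftTop.vertex j.succ = Fin.cons (Fin.last (M + 1)) (t.vertex j) := by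
  funext i
  apply Fin.ext
  induction i using Fin.cases with
  | zero =>
    have : t.liftTop.perm.symm 0 = 0 := by rw [Equiv.symm_apply_eq, liftTop_perm_zero]
    simp only [vertex_val, this]
    simp [liftTop]
  | succ i =>
    have : t.liftTop.perm.symm i.succ = (t.perm.symm i).succ := by
      rw [Equiv.symm_apply_eq, liftTop_perm_succ, Equiv.apply_symm_apply]
    simp only [vertex_val, this]
    simp [liftTop, vertex_val]

theorem liftTop_injective : Function.Injective (liftTop : KuhnSimplex k (M + 1) → _) := by
  intro t t' h
  ext1
  · simpa [liftTop] using congrArg base h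
  · have := congrArg (fun s => Equiv.Perm.decomposeFin s.perm) h
    simpa [liftTop] using this

theorem exists_liftTop_eq {s : KuhnSimplex (k + 1) (M + 1)} (h0 : s.perm 0 = 0)
    (htop : (s.base 0 : ℕ) = M) : ∃ t : KuhnSimplex k (M + 1), t.liftTop = s := by
  refine ⟨⟨Fin.tail s.base, (Equiv.Perm.decomposeFin s.perm).2⟩, ?_⟩
  have hfst : (Equiv.Perm.decomposeFin s.perm).1 = 0 := by
    conv_rhs => rw [← h0, ← Equiv.Perm.decomposeFin.symm_apply_apply s.perm]
    exact (Equiv.Perm.decomposeFin_symm_apply_zero _ _).symm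
  ext1
  · funext i
    induction i using Fin.cases with
    | zero => exact Fin.ext (by simp [liftTop, htop])
    | succ i => rfl
  · simp only [liftTop, ← hfst]
    exact Equiv.Perm.decomposeFin.symm_apply_apply s.perm

variable {lab : GridPoint (k + 1) (M + 1) → Fin (k + 2)}

theorem isDoor_liftTop_zero_iff (hlab : IsSpernerLabeling lab) (t : KuhnSimplex k (M + 1)) :
    t.liftTop.IsDoor lab 0 ↔ t.IsFullyLabeled canonicalLabel := by
  have hlabel (j : Fin (k + 1)) :
      lab (t.liftTop.vertex j.succ) = (canonicalLabel (t.vertex j)).succ := by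
    rw [vertex_liftTop, hlab.top _ ⟨0, rfl⟩, canonicalLabel_cons]
  constructor
  · intro hd v
    obtain ⟨j', hj', hv⟩ := hd v.succ (Fin.succ_ne_zero v)
    obtain ⟨j, rfl⟩ := Fin.exists_succ_eq.mpr hj'
    exact ⟨j, Fin.succ_injective _ ((hlabel j).symm.trans hv)⟩
  · intro hfull m hm
    obtain ⟨v, rfl⟩ := Fin.exists_succ_eq.mpr hm
    obtain ⟨j, hj⟩ := hfull v
    exact ⟨j.succ, Fin.succ_ne_zero j, by rw [hlabel]; exact congrArg Fin.succ hj⟩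

theorem not_isDoor_last (hlab : IsSpernerLabeling lab) {s : KuhnSimplex (k + 1) (M + 1)}
    (hbot : (s.base (s.perm (Fin.last k)) : ℕ) = 0) : ¬ s.IsDoor lab (Fin.last _) := by
  intro hd
  obtain ⟨j, hj, hlabel⟩ := hd _ (Fin.succ_ne_zero (s.perm (Fin.last k)))
  refine hlab.bottom _ _ (Fin.ext ?_) hlabel
  have := Fin.val_lt_last hj
  simp [vertex_val, hbot]
  omega

/-- A door on the face `x (s.perm 0) = M + 1` carries the label `1`, which the canonical labeling
puts only where no coordinate but `x 0` equals `M + 1`. -/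
theorem perm_zero_eq_zero_of_isDoor_zero (hlab : IsSpernerLabeling lab)
    {s : KuhnSimplex (k + 1) (M + 1)} (htop : (s.base (s.perm 0) : ℕ) + 1 = M + 1)
    (hd : s.IsDoor lab 0) : s.perm 0 = 0 := by
  obtain ⟨j, hj, hlabel⟩ := hd _ (Fin.succ_ne_zero 0)
  have hmem : s.vertex j (s.perm 0) = Fin.last _ := by
    have hj : 0 < (j : ℕ) := Nat.pos_of_ne_zero (Fin.val_ne_zero_iff.mpr hj)
    simp only [Fin.ext_iff, vertex_val, Equiv.symm_apply_apply, Fin.val_last, Fin.val_zero,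
      if_pos hj, htop]
  rw [hlab.top _ ⟨_, hmem⟩] at hlabel
  exact Fin.le_zero_iff.mp ((canonicalLabel_eq_succ_iff.mp hlabel).2 _ hmem)

theorem card_isDoor_isBoundaryFacet (hlab : IsSpernerLabeling lab) :
    #{p : KuhnSimplex (k + 1) (M + 1) × Fin (k + 2) |
        p.1.IsDoor lab p.2 ∧ p.1.IsBoundaryFacet p.2} =
      #{t : KuhnSimplex k (M + 1) | t.IsFullyLabeled canonicalLabel} := by
  symm
  refine card_nbij (fun t => (t.liftTop, 0)) ?_ (fun t _ t' _ h => ?_) ?_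
  · intro t ht
    simp only [coe_filter, Finset.mem_univ, true_and, Set.mem_ofPred_eq] at ht ⊢
    refine ⟨(isDoor_liftTop_zero_iff hlab t).mpr ht, Or.inl ⟨rfl, ?_⟩⟩
    simp [liftTop]
  · exact liftTop_injective (congrArg Prod.fst h)
  · rintro ⟨s, j⟩ hp
    simp only [coe_filter, Finset.mem_univ, true_and, Set.mem_ofPred_eq] at hp
    obtain ⟨hd, ⟨rfl, htop⟩ | ⟨rfl, hbot⟩⟩ := hp
    · have h0 := perm_zero_eq_zero_of_isDoor_zero hlab htop hd
      rw [h0] at htop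
      obtain ⟨t, rfl⟩ := exists_liftTop_eq h0 (by omega)
      exact ⟨t, by simpa using (isDoor_liftTop_zero_iff hlab t).mp hd, rfl⟩
    · exact absurd hd (not_isDoor_last hlab hbot)

theorem natCast_card_isFullyLabeled {lab : GridPoint k (M + 1) → Fin (k + 1)}
    (hlab : IsSpernerLabeling lab) :
    (#{s : KuhnSimplex k (M + 1) | s.IsFullyLabeled lab} : ZMod 2) = 1 := by
  induction k with
  | zero =>
    have hunique : Fintype.card (KuhnSimplex 0 (M + 1)) = 1 := Fintype.card_eq_one_iff.mpr
      ⟨⟨finZeroElim, 1⟩, fun s => by ext1 <;> exact Subsingleton.elim _ _⟩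
    have hfull (s : KuhnSimplex 0 (M + 1)) : s.IsFullyLabeled lab :=
      fun _ => ⟨0, Subsingleton.elim (α := Fin 1) _ _⟩
    rw [filter_true_of_mem fun s _ => hfull s, card_univ, hunique, Nat.cast_one]
  | succ k ih =>
    rw [← natCast_card_isDoor_eq_isFullyLabeled, natCast_card_isDoor_eq_isBoundaryFacet,
      card_isDoor_isBoundaryFacet hlab]
    exact ih isSpernerLabeling_canonicalLabel

theorem exists_isFullyLabeled {lab : GridPoint k (M + 1) → Fin (k + 1)}
    (hlab : IsSpernerLabeling lab) : ∃ s : KuhnSimplex k (M + 1), s.IsFullyLabeled lab := by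
  by_contra! h
  simpa [filter_false_of_mem fun s _ => h s] using natCast_card_isFullyLabeled hlab

end KuhnSimplex

section Crossing

variable {k N : ℕ}

def GridPoint.truncate (x : GridPoint k (N + 1)) (h : ∀ i, x i ≠ Fin.last _) : GridPoint k N :=
  fun i => (x i).castPred (h i)

theorem GridAdj.truncate {x x' : GridPoint k (N + 1)} (hadj : GridAdj x x')
    (h : ∀ i, x i ≠ Fin.last _) (h' : ∀ i, x' i ≠ Fin.last _) :
    GridAdj (x.truncate h) (x'.truncate h') := fun i => by
  simpa [GridPoint.truncate] using hadj i

/-- The extra layer `x i = N + 1` is labeled canonically, which makes `signLabel g` satisfy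
Sperner's boundary condition. -/
def signLabel (g : GridPoint k N → Fin k × Bool) (x : GridPoint k (N + 1)) : Fin (k + 1) :=
  if h : ∀ i, x i ≠ Fin.last _ then
    if (g (x.truncate h)).2 then 0 else (g (x.truncate h)).1.succ
  else canonicalLabel x

variable {g : GridPoint k N → Fin k × Bool} {x : GridPoint k (N + 1)}

theorem exists_of_signLabel_eq_zero (hx : signLabel g x = 0) :
    ∃ h, g (x.truncate h) = ((g (x.truncate h)).1, true) := by
  unfold signLabel at hx
  split_ifs at hx with h hg
  · exact ⟨h, Prod.ext rfl hg⟩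
  · exact absurd hx (Fin.succ_ne_zero _)
  · exact absurd (canonicalLabel_eq_zero_iff.mp hx) h

theorem exists_of_signLabel_eq_succ {i : Fin k} (hx : signLabel g x = i.succ) :
    (∃ h, g (x.truncate h) = (i, false)) ∨ x i = Fin.last _ := by
  unfold signLabel at hx
  split_ifs at hx with h hg
  · exact absurd hx.symm (Fin.succ_ne_zero i)
  · exact Or.inl ⟨h, Prod.ext (Fin.succ_injective _ hx) (by simpa using hg)⟩
  · exact Or.inr (canonicalLabel_eq_succ_iff.mp hx).1

theorem isSpernerLabeling_signLabel (hbot : ∀ x i, x i = 0 → g x ≠ (i, false)) :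
    IsSpernerLabeling (signLabel g) where
  bottom x i hx hlab := by
    rcases exists_of_signLabel_eq_succ hlab with ⟨h, hg⟩ | hlast
    · exact hbot _ i (Fin.ext (by simp [GridPoint.truncate, hx])) hg
    · exact Fin.last_pos.ne (hx.symm.trans hlast)
  top x := fun ⟨i, hi⟩ => by rw [signLabel, dif_neg fun h => h i hi]

/-- A discrete Poincaré–Miranda theorem. -/
theorem exists_gridAdj_of_sign_boundary (g : GridPoint (k + 1) N → Fin (k + 1) × Bool)
    (hbot : ∀ x i, x i = 0 → g x ≠ (i, false))
    (htop : ∀ x i, x i = Fin.last N → g x ≠ (i, true)) :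
    ∃ i x y, GridAdj x y ∧ g x = (i, true) ∧ g y = (i, false) := by
  obtain ⟨s, hs⟩ := KuhnSimplex.exists_isFullyLabeled (isSpernerLabeling_signLabel hbot)
  obtain ⟨j₀, hj₀⟩ := hs 0
  obtain ⟨h₀, hg₀⟩ := exists_of_signLabel_eq_zero hj₀
  set i := (g ((s.vertex j₀).truncate h₀)).1
  obtain ⟨j₁, hj₁⟩ := hs i.succ
  rcases exists_of_signLabel_eq_succ hj₁ with ⟨h₁, hg₁⟩ | hlast
  · exact ⟨i, _, _, (s.gridAdj_vertex j₀ j₁).truncate h₀ h₁, hg₀, hg₁⟩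
  · -- vertex `j₀` is adjacent to the face `x i = N + 1` but not on it, so it lies on `x i = N`
    refine absurd hg₀ (htop _ i (Fin.ext ?_))
    have hadj := s.gridAdj_vertex j₀ j₁ i
    have hlt := Fin.val_lt_last (h₀ i)
    rw [Fin.ext_iff, Fin.val_last] at hlast
    simp only [GridPoint.truncate, Fin.coe_castPred, Fin.val_last] at hlt ⊢
    omega

/-- A discrete Lebesgue covering theorem (the `d`-dimensional Hex theorem). -/
theorem exists_monochromatic_crossing (χ : GridPoint (k + 1) N → Fin (k + 1)) :
    ∃ i x y, χ x = i ∧ Relation.ReflTransGen (fun a b => GridAdj a b ∧ χ a = i ∧ χ b = i) x y ∧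
      x i = 0 ∧ y i = Fin.last N := by
  classical
  by_contra! hcross
  let Reaches (x : GridPoint (k + 1) N) : Prop :=
    ∃ y, Relation.ReflTransGen (fun a b => GridAdj a b ∧ χ a = χ x ∧ χ b = χ x) x y ∧
      y (χ x) = Fin.last N
  let g (x : GridPoint (k + 1) N) : Fin (k + 1) × Bool := (χ x, decide ¬ Reaches x)
  obtain ⟨i, x, y, hadj, hx, hy⟩ := exists_gridAdj_of_sign_boundary g
    (fun x i hx hg => by
      simp only [g, Prod.mk.injEq, decide_eq_false_iff_not, not_not] at hg
      obtain ⟨rfl, y, hxy, hy⟩ := hg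
      exact hcross _ x y rfl hxy hx hy)
    (fun x i hx hg => by
      simp only [g, Prod.mk.injEq, decide_eq_true_eq] at hg
      obtain ⟨rfl, hr⟩ := hg
      exact hr ⟨x, .refl, hx⟩)
  simp only [g, Prod.mk.injEq, decide_eq_true_eq, decide_eq_false_iff_not, not_not] at hx hy
  obtain ⟨rfl, hrx⟩ := hx
  obtain ⟨hχ, z, hyz, hz⟩ := hy
  rw [hχ] at hyz hz
  exact hrx ⟨z, .head ⟨hadj, rfl, hχ⟩ hyz, hz⟩

end Crossing

theorem EuclideanSpace.dist_le_sqrt_card_mul {ι : Type*} [Fintype ι] {u v : EuclideanSpace ℝ ι}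
    {t : ℝ} (ht : 0 ≤ t) (h : ∀ i, dist (u i) (v i) ≤ t) :
    dist u v ≤ √(Fintype.card ι) * t := by
  rw [EuclideanSpace.dist_eq]
  calc √(∑ i, dist (u i) (v i) ^ 2) ≤ √(∑ _i : ι, t ^ 2) :=
        Real.sqrt_le_sqrt (sum_le_sum fun i _ => pow_le_pow_left₀ dist_nonneg (h i) 2)
    _ = √(Fintype.card ι) * t := by
        rw [sum_const, card_univ, nsmul_eq_mul, Real.sqrt_mul (Nat.cast_nonneg _), Real.sqrt_sq ht]

theorem Relation.ReflTransGen.eq_of_separated {α E : Type*} [PseudoMetricSpace E]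
    {𝒰 : Set (Set E)} {t : ℝ}
    (hsep : ∀ U ∈ 𝒰, ∀ V ∈ 𝒰, U ≠ V → ∀ p ∈ U, ∀ q ∈ V, t ≤ dist p q)
    {r : α → α → Prop} {U : α → Set E} {θ : α → E} (hU : ∀ a b, r a b → U a ∈ 𝒰 ∧ U b ∈ 𝒰)
    (hθ : ∀ a, θ a ∈ U a) (hclose : ∀ a b, r a b → dist (θ a) (θ b) < t) {a b : α}
    (h : Relation.ReflTransGen r a b) : U a = U b := by
  induction h with
  | refl => rfl
  | tail _ hbc ih =>
    refine ih.trans (by_contra fun hne => (hclose _ _ hbc).not_ge ?_)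
    exact hsep _ (hU _ _ hbc).1 _ (hU _ _ hbc).2 hne _ (hθ _) _ (hθ _)

section GridEmbedding

variable {d N : ℕ} (x : EuclideanSpace ℝ (Fin d)) (s : ℝ)

noncomputable def gridEmbedding (N : ℕ) (y : GridPoint d N) : EuclideanSpace ℝ (Fin d) :=
  WithLp.toLp 2 fun i => x i - s + 2 * s / N * (y i : ℕ)

theorem gridEmbedding_apply (y : GridPoint d N) (i : Fin d) :
    gridEmbedding x s N y i = x i - s + 2 * s / N * (y i : ℕ) := rfl

variable {x s}

theorem dist_gridEmbedding_center_le (hs : 0 ≤ s) (y : GridPoint d N) :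
    dist (gridEmbedding x s N y) x ≤ √d * s := by
  refine (EuclideanSpace.dist_le_sqrt_card_mul hs fun i => ?_).trans_eq (by simp)
  have hy : ((y i : ℕ) : ℝ) ≤ N := by exact_mod_cast Nat.lt_succ_iff.mp (y i).isLt
  have hstep : 2 * s / N * (y i : ℕ) ≤ 2 * s := by
    rcases eq_or_ne N 0 with rfl | hN
    · simpa using hs
    · rw [div_mul_eq_mul_div, div_le_iff₀ (by positivity)]
      exact mul_le_mul_of_nonneg_left hy (by positivity)
  have : 0 ≤ 2 * s / N * (y i : ℕ) := by positivity
  rw [gridEmbedding_apply, Real.dist_eq, abs_le]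
  constructor <;> linarith

theorem dist_gridEmbedding_le_of_gridAdj (hs : 0 ≤ s) {y y' : GridPoint d N} (h : GridAdj y y') :
    dist (gridEmbedding x s N y) (gridEmbedding x s N y') ≤ √d * (2 * s / N) := by
  refine (EuclideanSpace.dist_le_sqrt_card_mul (t := 2 * s / N) (by positivity)
    fun i => ?_).trans_eq (by simp)
  have h₁ : ((y i : ℕ) : ℝ) ≤ (y' i : ℕ) + 1 := by exact_mod_cast (h i).1
  have h₂ : ((y' i : ℕ) : ℝ) ≤ (y i : ℕ) + 1 := by exact_mod_cast (h i).2
  have : 0 ≤ 2 * s / N := by positivity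
  rw [gridEmbedding_apply, gridEmbedding_apply, Real.dist_eq, abs_le]
  constructor <;> nlinarith

theorem two_mul_le_dist_gridEmbedding (hs : 0 ≤ s) {y y' : GridPoint d N} {i : Fin d}
    (hN : N ≠ 0) (hy : y i = 0) (hy' : y' i = Fin.last N) :
    2 * s ≤ dist (gridEmbedding x s N y) (gridEmbedding x s N y') := by
  refine le_trans (le_of_eq ?_) (PiLp.dist_apply_le _ _ i)
  have : x i - s + 2 * s / N * 0 - (x i - s + 2 * s / N * N) = -(2 * s) := by
    field_simp; ring
  rw [gridEmbedding_apply, gridEmbedding_apply, hy, hy', Real.dist_eq, Fin.val_zero, Fin.val_last,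
    Nat.cast_zero, this, abs_neg, abs_of_nonneg (by positivity)]

end GridEmbedding

theorem NagataDimLE.exists_forall_le_dist {k : ℕ} {Θ : Set (EuclideanSpace ℝ (Fin (k + 1)))}
    {c : ℝ} (hΘ : NagataDimLE Θ k c) {s δ : ℝ} (hs : 0 < s) (hδs : 2 * δ < s) (hδc : 2 * δ < c * s)
    (x : EuclideanSpace ℝ (Fin (k + 1))) :
    ∃ w, dist w x ≤ √(k + 1 : ℕ) * s ∧ ∀ θ ∈ Θ, δ ≤ dist θ w := by
  obtain ⟨𝒰, hcover, hdiam, hsep⟩ := hΘ s hs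
  obtain ⟨N, hN⟩ := exists_nat_gt (√(k + 1 : ℕ) * (2 * s) / (c * s - 2 * δ))
  have hN0 : (0 : ℝ) < N := lt_of_le_of_lt (by have := sub_pos.mpr hδc; positivity) hN
  have hstep : √(k + 1 : ℕ) * (2 * s / N) < c * s - 2 * δ := by
    rw [div_lt_iff₀ (sub_pos.mpr hδc)] at hN
    rw [← mul_div_assoc, div_lt_iff₀ hN0]
    linarith
  by_contra! hnear
  choose θ hθΘ hθ using fun y : GridPoint (k + 1) N =>
    hnear (gridEmbedding x s N y) (dist_gridEmbedding_center_le hs.le y)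
  choose χ hχ using fun y => Set.mem_iUnion.mp (hcover (hθΘ y))
  choose U hU hθU using fun y => Set.mem_sUnion.mp (hχ y)
  obtain ⟨i, y₀, y₁, -, hchain, hy₀, hy₁⟩ := exists_monochromatic_crossing χ
  have hU₀₁ : U y₀ = U y₁ := by
    refine hchain.eq_of_separated (hsep i) (fun a b h => ⟨h.2.1 ▸ hU a, h.2.2 ▸ hU b⟩) hθU
      fun a b h => ?_
    have ha := hθ a
    have hb := hθ b
    rw [dist_comm] at hb
    linarith [dist_triangle4 (θ a) (gridEmbedding x s N a) (gridEmbedding x s N b) (θ b),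
      dist_gridEmbedding_le_of_gridAdj (x := x) hs.le h.1]
  have hθ₀₁ : dist (θ y₀) (θ y₁) ≤ s := by
    have := (Metric.edist_le_ediam_of_mem (hθU y₀) (hU₀₁ ▸ hθU y₁)).trans (hdiam _ _ (hU y₀))
    rwa [edist_dist, ENNReal.ofReal_le_ofReal_iff hs.le] at this
  have h₀ := hθ y₀
  have h₁ := hθ y₁
  rw [dist_comm] at h₀
  linarith [two_mul_le_dist_gridEmbedding (x := x) hs.le (Nat.cast_ne_zero.mp hN0.ne') hy₀ hy₁,
    dist_triangle4 (gridEmbedding x s N y₀) (θ y₀) (θ y₁) (gridEmbedding x s N y₁)]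

/-- For every `d ≥ 1` and `c > 0` there is a `q > 0` such that every `Θ ⊆ ℝ^d` of Nagata
dimension at most `d - 1` with constant `c` is `q`-porous. -/
theorem exists_porosity_const_of_nagataDim_le {d : ℕ} (hd : 1 ≤ d) (c : ℝ) (hc : 0 < c) :
    ∃ q : ℝ, 0 < q ∧
      ∀ Θ : Set (EuclideanSpace ℝ (Fin d)), NagataDimLE Θ (d - 1) c → QPorous q Θ := by
  obtain ⟨k, rfl⟩ : ∃ k, d = k + 1 := ⟨d - 1, by omega⟩
  have hsqrt : 1 ≤ √(k + 1 : ℕ) := Real.one_le_sqrt.mpr (by simp)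
  refine ⟨min 1 c / (8 * √(k + 1 : ℕ)), by positivity, fun Θ hΘ x _ r hr => ?_⟩
  set s := r / (2 * √(k + 1 : ℕ))
  have hs : 0 < s := by positivity
  have hqr : min 1 c / (8 * √(k + 1 : ℕ)) * r = min 1 c / 4 * s := by
    simp only [s]; field_simp; ring
  have hrs : √(k + 1 : ℕ) * s = r / 2 := by simp only [s]; field_simp
  obtain ⟨w, hwx, hw⟩ := NagataDimLE.exists_forall_le_dist hΘ (δ := min 1 c / 4 * s) hs
    (by nlinarith [min_le_left 1 c]) (by nlinarith [min_le_right 1 c]) x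
  rw [hqr]
  refine ⟨w, fun z hz => ⟨?_, fun hzΘ => (hw z hzΘ).not_gt hz⟩⟩
  rw [Metric.mem_ball] at hz ⊢
  have : min 1 c / 4 * s ≤ r / 2 := by
    rw [← hrs]; nlinarith [min_le_left 1 c]
  linarith [dist_triangle z w x]
end

section
/- Let ℱ = {f₁, …, f_m} be a self-similar iterated function system on ℝ^d with attractor K. Then ℱ has finite types of neighborhoods (i.e., N_ε(ℱ) is finite for some ε > 0) if and only if ℱ satisfies the finite type condition (i.e., N₀(ℱ) is finite). -/
open Set
open scoped ENNReal

/-- The composition `f_𝐢 = f_{i₁} ∘ ⋯ ∘ f_{i_k}` associated with a finite word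
`𝐢 = i₁⋯i_k` (the empty word gives the identity). -/
def wordMap {d m : ℕ} (f : Fin m → EuclideanSpace ℝ (Fin d) → EuclideanSpace ℝ (Fin d)) :
    List (Fin m) → EuclideanSpace ℝ (Fin d) → EuclideanSpace ℝ (Fin d) :=
  fun l => l.foldr (fun i g => f i ∘ g) id

/-- The set `N_ε(ℱ)` of neighbor maps `h = f_𝐢⁻¹ ∘ f_𝐣 ≠ id` (encoded by
`f_𝐢 ∘ h = f_𝐣`) whose similarity ratio lies in `[r_min, r_min⁻¹]` and for which
`[K]_ε ∩ h([K]_ε) ≠ ∅`, where `[K]_ε` is the closed `ε`-neighborhood of `K`. -/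
def NeighborSet {d m : ℕ} (f : Fin m → EuclideanSpace ℝ (Fin d) → EuclideanSpace ℝ (Fin d))
    (rmin : ℝ) (K : Set (EuclideanSpace ℝ (Fin d))) (ε : ℝ) :
    Set (EuclideanSpace ℝ (Fin d) → EuclideanSpace ℝ (Fin d)) :=
  {h | (∃ I J : List (Fin m), wordMap f I ∘ h = wordMap f J) ∧ h ≠ id ∧
       (∃ ρ : ℝ, rmin ≤ ρ ∧ ρ ≤ rmin⁻¹ ∧ ∀ x y, dist (h x) (h y) = ρ * dist x y) ∧
       (Metric.cthickening ε K ∩ h '' Metric.cthickening ε K).Nonempty}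

/-!
The inclusion `N₀ ⊆ N_ε` is immediate. Conversely, let `g = f_I⁻¹ ∘ f_J` be a neighbor map with
`K ∩ g(K) = ∅`. Removing the last letter of `J` (if `sr g ≤ 1`) or of `I` (otherwise) keeps the
ratio in `[r_min, r_min⁻¹]` and does not move `g(K)` away from `K`. Since the map meets `K` once a
word is empty, the last map of this descent that misses `K` has the form `f_a⁻¹ ∘ p` or `p ∘ f_a`
with `p ∈ N₀ ∪ {id}`. There are finitely many such maps, and by compactness the images of `K`
under those missing `K` stay farther than some `τ > 0` from `K`. Any `h ∈ N_ε` brings `h(K)`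
within `(1 + r_min⁻¹) ε` of `K`, so for `ε = τ / (1 + r_min⁻¹)` it meets `K`, i.e. `h ∈ N₀`.
-/

open Function Metric Filter Topology

section Similarity

variable {E : Type*} [NormedAddCommGroup E] [InnerProductSpace ℝ E] [FiniteDimensional ℝ E]

/-- Isometries of a real inner product space are affine, hence onto in finite dimension. -/
theorem bijective_of_dist_eq_mul {g : E → E} {ρ : ℝ} (hρ : 0 < ρ)
    (hg : ∀ x y, dist (g x) (g y) = ρ * dist x y) : Bijective g := by
  have hiso : Isometry fun x => ρ⁻¹ • g x := Isometry.of_dist_eq fun x y => by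
    rw [dist_smul₀, hg, Real.norm_of_nonneg (inv_nonneg.2 hρ.le), inv_mul_cancel_left₀ hρ.ne']
  let A := hiso.affineIsometryOfStrictConvexSpace.toAffineMap
  have hA : Bijective A := by
    have hinj : Injective A := hiso.injective
    exact ⟨hinj, A.linear_surjective_iff.1
      (LinearMap.injective_iff_surjective.1 (A.linear_injective_iff.2 hinj))⟩
  have hgA : g = (ρ • ·) ∘ A := funext fun x => (smul_inv_smul₀ hρ.ne' (g x)).symm
  exact hgA ▸ (MulAction.bijective (Units.mk0 ρ hρ.ne')).comp hA

end Similarity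

theorem continuous_of_dist_eq_mul {X Y : Type*} [PseudoMetricSpace X] [PseudoMetricSpace Y]
    {g : X → Y} {ρ : ℝ} (hg : ∀ x y, dist (g x) (g y) = ρ * dist x y) : Continuous g :=
  (LipschitzWith.of_dist_le_mul fun x y => (hg x y).trans_le <|
    mul_le_mul_of_nonneg_right (Real.le_coe_toNNReal ρ) dist_nonneg).continuous

theorem dist_invFun_eq_inv_mul {X Y : Type*} [Nonempty X] [PseudoMetricSpace X]
    [PseudoMetricSpace Y] {g : X → Y} (hgs : Surjective g) {ρ : ℝ} (hρ : ρ ≠ 0)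
    (hg : ∀ x y, dist (g x) (g y) = ρ * dist x y) (u v : Y) :
    dist (invFun g u) (invFun g v) = ρ⁻¹ * dist u v := by
  conv_rhs => rw [← rightInverse_invFun hgs u, ← rightInverse_invFun hgs v, hg,
    inv_mul_cancel_left₀ hρ]

section NearImage

variable {X : Type*} [MetricSpace X] {K : Set X} {g : X → X} {t : ℝ}

def NearImage (K : Set X) (g : X → X) (t : ℝ) : Prop :=
  ∃ x ∈ K, ∃ y ∈ K, dist x (g y) ≤ t

theorem NearImage.mono {s : ℝ} (h : NearImage K g s) (hst : s ≤ t) : NearImage K g t :=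
  let ⟨x, hx, y, hy, hxy⟩ := h
  ⟨x, hx, y, hy, hxy.trans hst⟩

theorem nearImage_zero_iff : NearImage K g 0 ↔ ∃ y ∈ K, g y ∈ K := by
  simp only [NearImage, dist_le_zero]
  exact ⟨fun ⟨x, hx, y, hy, hxy⟩ => ⟨y, hy, hxy ▸ hx⟩, fun ⟨y, hy, hgy⟩ => ⟨_, hgy, y, hy, rfl⟩⟩

theorem eventually_not_nearImage (hK : IsCompact K) (hg : Continuous g)
    (h : ¬ NearImage K g 0) : ∀ᶠ t in 𝓝 0, ¬ NearImage K g t := by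
  have hsub : g '' K ⊆ Kᶜ := by
    rintro _ ⟨y, hy, rfl⟩ hgy
    exact h (nearImage_zero_iff.2 ⟨y, hy, hgy⟩)
  obtain ⟨δ, hδ, hδK⟩ := (hK.image hg).exists_cthickening_subset_open hK.isClosed.isOpen_compl hsub
  filter_upwards [Iio_mem_nhds hδ] with t ht ⟨x, hx, y, hy, hxy⟩
  exact hδK (mem_cthickening_of_dist_le x (g y) δ _ (mem_image_of_mem g hy)
    (hxy.trans ht.le)) hx

theorem nearImage_of_cthickening_inter_nonempty {ρ ε : ℝ} (hK : IsCompact K) (hε : 0 ≤ ε)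
    (hρ : 0 ≤ ρ) (hg : ∀ x y, dist (g x) (g y) = ρ * dist x y)
    (h : (cthickening ε K ∩ g '' cthickening ε K).Nonempty) : NearImage K g ((1 + ρ) * ε) := by
  rw [hK.cthickening_eq_biUnion_closedBall hε] at h
  obtain ⟨_, hw, u, hu, rfl⟩ := h
  obtain ⟨x, hx, hux⟩ := mem_iUnion₂.1 hw
  obtain ⟨y, hy, huy⟩ := mem_iUnion₂.1 hu
  refine ⟨x, hx, y, hy, ?_⟩
  calc dist x (g y) ≤ dist (g u) x + dist (g u) (g y) := dist_triangle_left _ _ _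
    _ ≤ ε + ρ * ε := by
      rw [hg]
      exact add_le_add (mem_closedBall.1 hux) (mul_le_mul_of_nonneg_left (mem_closedBall.1 huy) hρ)
    _ = (1 + ρ) * ε := by ring

theorem NearImage.comp_invFun [Nonempty X] {φ : X → X} (hφ : Injective φ) (hφK : MapsTo φ K K)
    (h : NearImage K g t) : NearImage K (g ∘ invFun φ) t :=
  let ⟨x, hx, y, hy, hxy⟩ := h
  ⟨x, hx, φ y, hφK hy, by rwa [comp_apply, leftInverse_invFun hφ]⟩

theorem NearImage.comp_left {φ : X → X} (hφK : MapsTo φ K K)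
    (hφ : ∀ x y, dist (φ x) (φ y) ≤ dist x y) (h : NearImage K g t) : NearImage K (φ ∘ g) t :=
  let ⟨x, hx, y, hy, hxy⟩ := h
  ⟨φ x, hφK hx, y, hy, (hφ x (g y)).trans hxy⟩

theorem exists_pos_forall_not_nearImage {C : Set (X → X)} (hK : IsCompact K)
    (hC : C.Finite) (hcont : ∀ c ∈ C, Continuous c) :
    ∃ τ > 0, ∀ c ∈ C, ¬ NearImage K c 0 → ¬ NearImage K c τ := by
  have hev : ∀ᶠ t in 𝓝 0, ∀ c ∈ C, ¬ NearImage K c 0 → ¬ NearImage K c t :=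
    hC.eventually_all.2 fun c hc => by
      by_cases h0 : NearImage K c 0
      · exact Eventually.of_forall fun _ h => absurd h0 h
      · exact (eventually_not_nearImage hK (hcont c hc) h0).mono fun _ ht _ => ht
  have hpos : ∀ᶠ t in 𝓝[>] (0 : ℝ), 0 < t := self_mem_nhdsWithin
  exact (hpos.and (hev.filter_mono nhdsWithin_le_nhds)).exists

end NearImage

section SelfSimilar

variable {d m : ℕ} {f : Fin m → EuclideanSpace ℝ (Fin d) → EuclideanSpace ℝ (Fin d)}

theorem wordMap_append (I J : List (Fin m)) : wordMap f (I ++ J) = wordMap f I ∘ wordMap f J := by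
  induction I with
  | nil => rfl
  | cons i I ih => exact congrArg (f i ∘ ·) ih

theorem wordMap_concat (I : List (Fin m)) (a : Fin m) :
    wordMap f (I.concat a) = wordMap f I ∘ f a := by
  rw [List.concat_eq_append, wordMap_append]
  rfl

theorem wordMap_injective (hf : ∀ i, Injective (f i)) (I : List (Fin m)) :
    Injective (wordMap f I) := by
  induction I with
  | nil => exact injective_id
  | cons i I ih => exact (hf i).comp ih

theorem mapsTo_wordMap {K : Set (EuclideanSpace ℝ (Fin d))} (hf : ∀ i, MapsTo (f i) K K)
    (I : List (Fin m)) : MapsTo (wordMap f I) K K := by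
  induction I with
  | nil => exact mapsTo_id K
  | cons i I ih => exact (hf i).comp ih

theorem NeighborSet.mono {rmin δ ε : ℝ} {K : Set (EuclideanSpace ℝ (Fin d))} (hδε : δ ≤ ε) :
    NeighborSet f rmin K δ ⊆ NeighborSet f rmin K ε :=
  fun _ ⟨hw, hid, hρ, hmeet⟩ =>
    ⟨hw, hid, hρ, hmeet.mono (inter_subset_inter (cthickening_mono hδε K)
      (image_mono (cthickening_mono hδε K)))⟩

theorem continuous_of_mem_neighborSet {rmin ε : ℝ} {K : Set (EuclideanSpace ℝ (Fin d))}
    {p : EuclideanSpace ℝ (Fin d) → EuclideanSpace ℝ (Fin d)}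
    (hp : p ∈ NeighborSet f rmin K ε) : Continuous p :=
  let ⟨_, _, ⟨_, _, _, hρ⟩, _⟩ := hp
  continuous_of_dist_eq_mul hρ

variable (f) in
structure IsNeighborMap (rmin ρ : ℝ) (I J : List (Fin m))
    (g : EuclideanSpace ℝ (Fin d) → EuclideanSpace ℝ (Fin d)) : Prop where
  wordMap_comp : wordMap f I ∘ g = wordMap f J
  le_ratio : rmin ≤ ρ
  ratio_le : ρ ≤ rmin⁻¹
  dist_eq : ∀ x y, dist (g x) (g y) = ρ * dist x y

namespace IsNeighborMap

variable {r : Fin m → ℝ} {rmin ρ : ℝ} {I J : List (Fin m)}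
  {g : EuclideanSpace ℝ (Fin d) → EuclideanSpace ℝ (Fin d)}

theorem mem_insert_neighborSet_zero {K : Set (EuclideanSpace ℝ (Fin d))}
    (hg : IsNeighborMap f rmin ρ I J g) (h0 : NearImage K g 0) :
    g ∈ insert id (NeighborSet f rmin K 0) := by
  by_cases hid : g = id
  · exact hid ▸ mem_insert _ _
  obtain ⟨y, hy, hgy⟩ := nearImage_zero_iff.1 h0
  exact mem_insert_of_mem _ ⟨⟨I, J, hg.wordMap_comp⟩, hid,
    ⟨ρ, hg.le_ratio, hg.ratio_le, hg.dist_eq⟩,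
    g y, self_subset_cthickening K hgy, y, self_subset_cthickening K hy, rfl⟩

theorem comp_invFun {b : Fin m} (hrmin : 0 < rmin) (hrb : rmin ≤ r b) (hrb1 : r b ≤ 1)
    (hsim : ∀ x y, dist (f b x) (f b y) = r b * dist x y)
    (hg : IsNeighborMap f rmin ρ I (J.concat b) g) (hρ : ρ ≤ 1) :
    IsNeighborMap f rmin (ρ * (r b)⁻¹) I J (g ∘ invFun (f b)) := by
  have hrb0 : 0 < r b := hrmin.trans_le hrb
  have hfb : Surjective (f b) := (bijective_of_dist_eq_mul hrb0 hsim).2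
  refine ⟨?_, ?_, ?_, fun x y => ?_⟩
  · calc wordMap f I ∘ g ∘ invFun (f b) = wordMap f J ∘ (f b ∘ invFun (f b)) := by
          rw [← comp_assoc, hg.wordMap_comp, wordMap_concat]; rfl
      _ = wordMap f J := by rw [(rightInverse_invFun hfb).comp_eq_id]; rfl
  · exact hg.le_ratio.trans <| (le_mul_inv_iff₀ hrb0).2 <|
      mul_le_of_le_one_right (hrmin.le.trans hg.le_ratio) hrb1
  · exact (mul_le_of_le_one_left (inv_nonneg.2 hrb0.le) hρ).trans (inv_anti₀ hrmin hrb)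
  · rw [comp_apply, comp_apply, hg.dist_eq, dist_invFun_eq_inv_mul hfb hrb0.ne' hsim, mul_assoc]

theorem comp_left {a : Fin m} (hrmin : 0 < rmin) (hra : rmin ≤ r a) (hra1 : r a ≤ 1)
    (hsim : ∀ x y, dist (f a x) (f a y) = r a * dist x y)
    (hg : IsNeighborMap f rmin ρ (I.concat a) J g) (hρ : 1 ≤ ρ) :
    IsNeighborMap f rmin (r a * ρ) I J (f a ∘ g) := by
  refine ⟨?_, ?_, ?_, fun x y => ?_⟩
  · rw [← hg.wordMap_comp, wordMap_concat]; rfl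
  · exact hra.trans (le_mul_of_one_le_right (hrmin.le.trans hra) hρ)
  · exact (mul_le_of_le_one_left (zero_le_one.trans hρ) hra1).trans hg.ratio_le
  · rw [comp_apply, comp_apply, hsim, hg.dist_eq, mul_assoc]

end IsNeighborMap

variable (f) in
def candidates (N : Set (EuclideanSpace ℝ (Fin d) → EuclideanSpace ℝ (Fin d))) :
    Set (EuclideanSpace ℝ (Fin d) → EuclideanSpace ℝ (Fin d)) :=
  ⋃ a, ((invFun (f a) ∘ ·) '' N ∪ (· ∘ f a) '' N)

theorem candidates_finite {N : Set (EuclideanSpace ℝ (Fin d) → EuclideanSpace ℝ (Fin d))}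
    (hN : N.Finite) : (candidates f N).Finite :=
  finite_iUnion fun _ => (hN.image _).union (hN.image _)

theorem continuous_of_mem_candidates {r : Fin m → ℝ}
    (hr : ∀ i, 0 < r i) (hsim : ∀ i x y, dist (f i x) (f i y) = r i * dist x y)
    {N : Set (EuclideanSpace ℝ (Fin d) → EuclideanSpace ℝ (Fin d))}
    (hN : ∀ p ∈ N, Continuous p) {c : EuclideanSpace ℝ (Fin d) → EuclideanSpace ℝ (Fin d)}
    (hc : c ∈ candidates f N) : Continuous c := by
  obtain ⟨a, ⟨p, hp, rfl⟩ | ⟨p, hp, rfl⟩⟩ := mem_iUnion.1 hc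
  · exact (continuous_of_dist_eq_mul (dist_invFun_eq_inv_mul
      (bijective_of_dist_eq_mul (hr a) (hsim a)).2 (hr a).ne' (hsim a))).comp (hN p hp)
  · exact (hN p hp).comp (continuous_of_dist_eq_mul (hsim a))

theorem exists_candidate_nearImage {r : Fin m → ℝ} {rmin : ℝ}
    {K : Set (EuclideanSpace ℝ (Fin d))} (hrmin : 0 < rmin) (hr : ∀ i, rmin ≤ r i ∧ r i ≤ 1)
    (hsim : ∀ i x y, dist (f i x) (f i y) = r i * dist x y) (hfK : ∀ i, MapsTo (f i) K K)
    {I J : List (Fin m)} {g : EuclideanSpace ℝ (Fin d) → EuclideanSpace ℝ (Fin d)} {ρ t : ℝ}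
    (hg : IsNeighborMap f rmin ρ I J g) (ht : NearImage K g t) (hg0 : ¬ NearImage K g 0) :
    ∃ c ∈ candidates f (insert id (NeighborSet f rmin K 0)),
      ¬ NearImage K c 0 ∧ NearImage K c t := by
  have hinj : ∀ i, Injective (f i) := fun i =>
    (bijective_of_dist_eq_mul (hrmin.trans_le (hr i).1) (hsim i)).1
  rcases List.eq_nil_or_concat I with rfl | ⟨I, a, rfl⟩
  · obtain ⟨-, -, y, hy, -⟩ := ht
    have hgy : g y = wordMap f J y := congrFun hg.wordMap_comp y
    exact absurd (nearImage_zero_iff.2 ⟨y, hy, hgy ▸ mapsTo_wordMap hfK J hy⟩) hg0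
  rcases List.eq_nil_or_concat J with rfl | ⟨J, b, rfl⟩
  · obtain ⟨x, hx, -⟩ := ht
    have hgx : g (wordMap f (I.concat a) x) = x :=
      wordMap_injective hinj _ (congrFun hg.wordMap_comp _)
    exact absurd (nearImage_zero_iff.2 ⟨_, mapsTo_wordMap hfK _ hx, hgx ▸ hx⟩) hg0
  rcases le_or_gt ρ 1 with hρ | hρ
  · have hp := hg.comp_invFun hrmin (hr b).1 (hr b).2 (hsim b) hρ
    have hpg : (g ∘ invFun (f b)) ∘ f b = g :=
      funext fun x => congrArg g (leftInverse_invFun (hinj b) x)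
    by_cases hp0 : NearImage K (g ∘ invFun (f b)) 0
    · exact ⟨g, mem_iUnion.2 ⟨b, Or.inr ⟨_, hp.mem_insert_neighborSet_zero hp0, hpg⟩⟩, hg0, ht⟩
    · exact exists_candidate_nearImage hrmin hr hsim hfK hp (ht.comp_invFun (hinj b) (hfK b)) hp0
  · have hp := hg.comp_left hrmin (hr a).1 (hr a).2 (hsim a) hρ.le
    have hpg : invFun (f a) ∘ f a ∘ g = g :=
      funext fun x => leftInverse_invFun (hinj a) (g x)
    have hpt : NearImage K (f a ∘ g) t := ht.comp_left (hfK a) fun x y => by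
      rw [hsim]; exact mul_le_of_le_one_left dist_nonneg (hr a).2
    by_cases hp0 : NearImage K (f a ∘ g) 0
    · exact ⟨g, mem_iUnion.2 ⟨a, Or.inl ⟨_, hp.mem_insert_neighborSet_zero hp0, hpg⟩⟩, hg0, ht⟩
    · exact exists_candidate_nearImage hrmin hr hsim hfK hp hpt hp0
termination_by I.length + J.length

end SelfSimilar

theorem finite_types_of_neighborhoods_iff_finite_type_general {d m : ℕ}
    (f : Fin m → EuclideanSpace ℝ (Fin d) → EuclideanSpace ℝ (Fin d))
    (r : Fin m → ℝ) (hr : ∀ i, 0 < r i ∧ r i < 1)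
    (hsim : ∀ i, ∀ x y, dist (f i x) (f i y) = r i * dist x y)
    (K : Set (EuclideanSpace ℝ (Fin d))) (hKc : IsCompact K)
    (hKattr : K = ⋃ i, f i '' K)
    (rmin : ℝ) (hrmin : IsLeast (Set.range r) rmin) :
    (∃ ε : ℝ, 0 < ε ∧ (NeighborSet f rmin K ε).Finite) ↔
      (NeighborSet f rmin K 0).Finite := by
  refine ⟨fun ⟨ε, hε, hfin⟩ => hfin.subset (NeighborSet.mono hε.le), fun hfin => ?_⟩
  obtain ⟨⟨i₀, hi₀⟩, hle⟩ := hrmin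
  have hrmin0 : 0 < rmin := hi₀ ▸ (hr i₀).1
  have hr' : ∀ i, rmin ≤ r i ∧ r i ≤ 1 := fun i => ⟨hle ⟨i, rfl⟩, (hr i).2.le⟩
  have hfK : ∀ i, MapsTo (f i) K K := fun i x hx =>
    hKattr ▸ mem_iUnion.2 ⟨i, mem_image_of_mem _ hx⟩
  obtain ⟨τ, hτ, hsep⟩ := exists_pos_forall_not_nearImage hKc (candidates_finite (hfin.insert id))
    fun c => continuous_of_mem_candidates (fun i => (hr i).1) hsim
      (forall_mem_insert.2 ⟨continuous_id, fun _ => continuous_of_mem_neighborSet⟩)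
  have hτ' : 0 < 1 + rmin⁻¹ := by positivity
  refine ⟨τ / (1 + rmin⁻¹), div_pos hτ hτ', hfin.subset ?_⟩
  rintro g ⟨⟨I, J, hIJ⟩, hid, ⟨ρ, hρ₁, hρ₂, hρ⟩, hmeet⟩
  have hg : IsNeighborMap f rmin ρ I J g := ⟨hIJ, hρ₁, hρ₂, hρ⟩
  have hgτ : NearImage K g τ := (nearImage_of_cthickening_inter_nonempty hKc (div_pos hτ hτ').le
    (hrmin0.trans_le hρ₁).le hρ hmeet).mono <| by
      rw [mul_div_assoc', div_le_iff₀ hτ', mul_comm]; gcongr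
  have hg0 : NearImage K g 0 := by
    by_contra hg0
    obtain ⟨c, hc, hc0, hct⟩ := exists_candidate_nearImage hrmin0 hr' hsim hfK hg hgτ hg0
    exact hsep c hc hc0 hct
  exact (hg.mem_insert_neighborSet_zero hg0).resolve_left hid

/-- A self-similar IFS on `ℝ^d` has finite types of neighborhoods (`N_ε(ℱ)` finite for some
`ε > 0`) if and only if it satisfies the finite type condition (`N₀(ℱ)` finite). -/
theorem finite_types_of_neighborhoods_iff_finite_type {d m : ℕ}
    (f : Fin m → EuclideanSpace ℝ (Fin d) → EuclideanSpace ℝ (Fin d))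
    (r : Fin m → ℝ) (hr : ∀ i, 0 < r i ∧ r i < 1)
    (hsim : ∀ i, ∀ x y, dist (f i x) (f i y) = r i * dist x y)
    (K : Set (EuclideanSpace ℝ (Fin d))) (hKne : K.Nonempty) (hKc : IsCompact K)
    (hKattr : K = ⋃ i, f i '' K)
    (rmin : ℝ) (hrmin : IsLeast (Set.range r) rmin) :
    (∃ ε : ℝ, 0 < ε ∧ (NeighborSet f rmin K ε).Finite) ↔
      (NeighborSet f rmin K 0).Finite :=
  finite_types_of_neighborhoods_iff_finite_type_general f r hr hsim K hKc hKattr rmin hrmin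
end

section
/- Let d ≥ 2 and let K ⊆ ℝ^d be the attractor of a self-similar IFS ℱ = {f₁, …, f_m} satisfying the finite type condition and such that f_i(K) ∩ f_j(K) is finite for all 1 ≤ i < j ≤ m. Then K has Nagata dimension at most 1: there exists c > 0 such that for every s > 0 the set K admits an s-cover 𝒰₀ ∪ 𝒰₁ where each 𝒰_i is cs-separated. -/
open Set
open scoped ENNReal

/-!
At scale `t` the attractor is covered by the pieces `f_I(K)` over the minimal words `I` with
`r_I ≤ t`; all of them have ratio comparable to `t`, so two intersecting pieces differ by a map
`f_I⁻¹ ∘ f_J` from the finite set `N₀(ℱ) ∪ {id}`. Finiteness of `N₀(ℱ)` then gives three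
uniform separations, each at scale `t`: disjoint pieces are `γ t` apart (climb by factors
`rmin⁻¹` until the ancestors meet; below them lie only finitely many configurations), points on
two pieces ("junctions") are `δ t` apart (they come from the finite sets `K ∩ h(K)`, finite
since each `f_i(K) ∩ f_j(K)` is), and points of two different pieces that stay `β t` away
from all junctions are `ψ t` apart (compactness, once more over finitely many neighbor maps).
The two families are the pieces with the junctions' `β t`-neighborhoods removed, and small
balls around the junctions.
-/

open Filter Topology Metric Function

namespace SelfSimilar

section Metric

variable {X Y : Type*} [PseudoMetricSpace X] [PseudoMetricSpace Y] {g : X → Y} {ρ : ℝ}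

theorem continuous_of_dist_eq_mul (hg : ∀ x y, dist (g x) (g y) = ρ * dist x y) :
    Continuous g :=
  (LipschitzWith.of_dist_le_mul (K := Real.nnabs ρ) fun x y => by
    rw [hg, Real.coe_nnabs]
    exact mul_le_mul_of_nonneg_right (le_abs_self ρ) dist_nonneg).continuous

theorem exists_pos_le_dist_of_finite {ι : Type*} {S : Set ι} (hS : S.Finite) {A B : ι → Set X}
    (hA : ∀ i ∈ S, IsCompact (A i)) (hB : ∀ i ∈ S, IsClosed (B i))
    (hAB : ∀ i ∈ S, Disjoint (A i) (B i)) :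
    ∃ ε > 0, ∀ i ∈ S, ∀ x ∈ A i, ∀ y ∈ B i, ε ≤ dist x y := by
  have hev : ∀ᶠ ε in 𝓝[>] (0 : ℝ), ∀ i ∈ S, ∀ x ∈ A i, ∀ y ∈ B i, ε ≤ dist x y := by
    refine hS.eventually_all.2 fun i hi => ?_
    obtain ⟨δ, hδ, hsep⟩ := exists_pos_forall_lt_edist (hA i hi) (hB i hi) (hAB i hi)
    filter_upwards [Ioo_mem_nhdsGT (NNReal.coe_pos.2 hδ)] with ε hε x hx y hy
    have hlt := hsep x hx y hy
    rw [edist_nndist, ENNReal.coe_lt_coe, ← NNReal.coe_lt_coe, coe_nndist] at hlt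
    exact hε.2.le.trans hlt.le
  obtain ⟨ε, hε, hε0⟩ := (hev.and self_mem_nhdsWithin).exists
  exact ⟨ε, hε0, hε⟩

def IsSeparatedCover {ι : Type*} (K : Set X) (s δ : ℝ) (𝒰 : ι → Set (Set X)) : Prop :=
  (K ⊆ ⋃ i, ⋃₀ 𝒰 i) ∧ (∀ i, ∀ U ∈ 𝒰 i, ediam U ≤ ENNReal.ofReal s) ∧
    ∀ i, ∀ U ∈ 𝒰 i, ∀ V ∈ 𝒰 i, U ≠ V → ∀ p ∈ U, ∀ q ∈ V, δ ≤ dist p q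

theorem isSeparatedCover_const {ι : Type*} [Nonempty ι] {K : Set X} (hK : Bornology.IsBounded K)
    {s : ℝ} (hs : diam K ≤ s) (δ : ℝ) : IsSeparatedCover K s δ fun _ : ι => {K} := by
  refine ⟨fun x hx => mem_iUnion.2 ⟨Classical.arbitrary ι, mem_sUnion.2 ⟨K, rfl, hx⟩⟩,
    ?_, ?_⟩
  · rintro - U rfl
    exact ediam_le_of_forall_dist_le fun x hx y hy => (dist_le_diam_of_mem hK hx hy).trans hs
  · rintro - U rfl V rfl hUV
    exact absurd rfl hUV

theorem isSeparatedCover_of_pieces {ι : Type*} {K Z : Set X} {S : Set ι} {P : ι → Set X}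
    {s ρ c : ℝ} (hcover : K ⊆ ⋃ i ∈ S, P i)
    (hdiam : ∀ i ∈ S, ∀ x ∈ P i, ∀ y ∈ P i, dist x y ≤ s) (hρ : 2 * ρ ≤ s)
    (hZ : ∀ z ∈ Z, ∀ z' ∈ Z, z ≠ z' → c + 2 * ρ ≤ dist z z')
    (hP : ∀ i ∈ S, ∀ j ∈ S, i ≠ j → ∀ x ∈ P i, ∀ y ∈ P j,
      (∀ z ∈ Z, ρ ≤ dist x z) → (∀ z ∈ Z, ρ ≤ dist y z) → c ≤ dist x y) :
    IsSeparatedCover K s c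
      ![(fun i => {x ∈ P i | ∀ z ∈ Z, ρ ≤ dist x z}) '' S, (fun z => closedBall z ρ) '' Z] := by
  refine ⟨fun x hx => ?_, Fin.forall_fin_two.2 ⟨?_, ?_⟩, Fin.forall_fin_two.2 ⟨?_, ?_⟩⟩
  · obtain ⟨i, hi, hxi⟩ := mem_iUnion₂.1 (hcover hx)
    by_cases hfar : ∀ z ∈ Z, ρ ≤ dist x z
    · exact mem_iUnion.2 ⟨0, mem_sUnion.2 ⟨_, mem_image_of_mem _ hi, hxi, hfar⟩⟩
    · push Not at hfar
      obtain ⟨z, hz, hxz⟩ := hfar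
      exact mem_iUnion.2 ⟨1, mem_sUnion.2 ⟨_, mem_image_of_mem _ hz, mem_closedBall.2 hxz.le⟩⟩
  · rintro - ⟨i, hi, rfl⟩
    exact ediam_le_of_forall_dist_le fun x hx y hy => hdiam i hi x hx.1 y hy.1
  · rintro - ⟨z, -, rfl⟩
    refine ediam_le_of_forall_dist_le fun x hx y hy => ?_
    linarith [dist_triangle_right x y z, mem_closedBall.1 hx, mem_closedBall.1 hy]
  · rintro - ⟨i, hi, rfl⟩ - ⟨j, hj, rfl⟩ hUV x ⟨hx, hxZ⟩ y ⟨hy, hyZ⟩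
    exact hP i hi j hj (fun h => hUV (h ▸ rfl)) x hx y hy hxZ hyZ
  · rintro - ⟨z, hz, rfl⟩ - ⟨z', hz', rfl⟩ hUV x hx y hy
    have := hZ z hz z' hz' fun h => hUV (h ▸ rfl)
    linarith [dist_triangle4 z x y z', dist_comm x z, mem_closedBall.1 hx, mem_closedBall.1 hy]

theorem injective_of_dist_eq_mul {Z : Type*} [MetricSpace Z] {h : Z → X} (hρ : ρ ≠ 0)
    (hh : ∀ x y, dist (h x) (h y) = ρ * dist x y) : Injective h := fun x y hxy => by
  have hxy' := hh x y
  rw [hxy, dist_self, eq_comm, mul_eq_zero] at hxy'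
  exact dist_eq_zero.1 (hxy'.resolve_left hρ)

end Metric

section Similarity

variable {V : Type*} [NormedAddCommGroup V] [NormedSpace ℝ V] [StrictConvexSpace ℝ V]
  [FiniteDimensional ℝ V] {g : V → V} {ρ : ℝ}

/-- Rescaled, `g` is an isometry, hence affine by Mazur–Ulam. -/
theorem surjective_of_dist_eq_mul (hρ : 0 < ρ) (hg : ∀ x y, dist (g x) (g y) = ρ * dist x y) :
    Surjective g := by
  have hiso : Isometry (ρ⁻¹ • g) := Isometry.of_dist_eq fun x y => by
    rw [Pi.smul_apply, Pi.smul_apply, dist_smul₀, hg, Real.norm_of_nonneg (inv_nonneg.2 hρ.le),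
      inv_mul_cancel_left₀ hρ.ne']
  intro z
  let _ : Inhabited V := ⟨0⟩
  obtain ⟨x, hx⟩ :=
    (hiso.affineIsometryOfStrictConvexSpace.toAffineIsometryEquiv rfl).surjective (ρ⁻¹ • z)
  exact ⟨x, smul_right_injective V (inv_ne_zero hρ.ne') hx⟩

end Similarity

theorem exists_pos_lt_one_forall_le {ι : Type*} [Finite ι] {r : ι → ℝ} (hr : ∀ i, r i < 1) :
    ∃ q, 0 < q ∧ q < 1 ∧ ∀ i, r i ≤ q := by
  have hle : ∀ᶠ q in 𝓝[<] (1 : ℝ), ∀ i, r i ≤ q := eventually_all.2 fun i => by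
    filter_upwards [Ioo_mem_nhdsLT (hr i)] with q hq using hq.1.le
  have hpos : ∀ᶠ q in 𝓝[<] (1 : ℝ), q ∈ Ioo 0 1 := Ioo_mem_nhdsLT one_pos
  obtain ⟨q, ⟨hq0, hq1⟩, hq⟩ := (hpos.and hle).exists
  exact ⟨q, hq0, hq1, hq⟩

variable {d m : ℕ}

local notation "𝔼" d:max => EuclideanSpace ℝ (Fin d)

section Words

variable {r : Fin m → ℝ} {f : Fin m → 𝔼 d → 𝔼 d} {K : Set (𝔼 d)} {I J A : List (Fin m)} {t : ℝ}

def wordRatio (r : Fin m → ℝ) (I : List (Fin m)) : ℝ := (I.map r).prod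

@[simp] theorem wordRatio_nil : wordRatio r [] = 1 := rfl

@[simp] theorem wordRatio_cons (i : Fin m) (I : List (Fin m)) :
    wordRatio r (i :: I) = r i * wordRatio r I := List.prod_cons

@[simp] theorem wordRatio_append (I J : List (Fin m)) :
    wordRatio r (I ++ J) = wordRatio r I * wordRatio r J := by
  simp [wordRatio]

theorem wordRatio_pos (hr : ∀ i, 0 < r i) (I : List (Fin m)) : 0 < wordRatio r I :=
  List.prod_pos fun a ha => by
    obtain ⟨i, -, rfl⟩ := List.mem_map.1 ha
    exact hr i

theorem wordRatio_le_pow (hr : ∀ i, 0 < r i) {q : ℝ} (hq : ∀ i, r i ≤ q) (I : List (Fin m)) :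
    wordRatio r I ≤ q ^ I.length := by
  induction I with
  | nil => simp
  | cons i I ih =>
    rw [wordRatio_cons, List.length_cons, pow_succ']
    exact mul_le_mul (hq i) ih (wordRatio_pos hr I).le ((hr i).le.trans (hq i))

theorem finite_setOf_lt_wordRatio (hr : ∀ i, 0 < r i ∧ r i < 1) {c : ℝ} (hc : 0 < c) :
    {I : List (Fin m) | c < wordRatio r I}.Finite := by
  obtain ⟨q, hq0, hq1, hq⟩ := exists_pos_lt_one_forall_le fun i => (hr i).2
  obtain ⟨n, hn⟩ := exists_pow_lt_of_lt_one hc hq1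
  refine (List.finite_length_le (Fin m) n).subset fun I (hI : c < wordRatio r I) =>
    show I.length ≤ n from ?_
  by_contra! hlen
  have := wordRatio_le_pow (fun i => (hr i).1) hq I
  have := pow_le_pow_of_le_one hq0.le hq1.le hlen.le
  linarith

@[simp] theorem wordMap_nil : wordMap f [] = id := rfl

@[simp] theorem wordMap_cons (i : Fin m) (I : List (Fin m)) :
    wordMap f (i :: I) = f i ∘ wordMap f I := rfl

theorem wordMap_append (I J : List (Fin m)) :
    wordMap f (I ++ J) = wordMap f I ∘ wordMap f J := by
  induction I with
  | nil => rfl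
  | cons i I ih => rw [List.cons_append, wordMap_cons, wordMap_cons, ih]; rfl

theorem dist_wordMap (hsim : ∀ i x y, dist (f i x) (f i y) = r i * dist x y)
    (I : List (Fin m)) (x y : 𝔼 d) :
    dist (wordMap f I x) (wordMap f I y) = wordRatio r I * dist x y := by
  induction I with
  | nil => simp
  | cons i I ih => simp [hsim, ih, mul_assoc]

theorem le_dist_of_mul_le_dist_wordMap (hr : ∀ i, 0 < r i)
    (hsim : ∀ i x y, dist (f i x) (f i y) = r i * dist x y) (hI : wordRatio r I ≤ t) {β : ℝ}
    {x y : 𝔼 d} (h : β * t ≤ dist (wordMap f I x) (wordMap f I y)) : β ≤ dist x y := by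
  rw [dist_wordMap hsim] at h
  refine le_of_mul_le_mul_right ?_ ((wordRatio_pos hr I).trans_le hI)
  calc β * t ≤ wordRatio r I * dist x y := h
    _ ≤ dist x y * t := by rw [mul_comm]; exact mul_le_mul_of_nonneg_left hI dist_nonneg

theorem image_wordMap_subset (hK : K = ⋃ i, f i '' K) (I : List (Fin m)) :
    wordMap f I '' K ⊆ K := by
  induction I with
  | nil => simp
  | cons i I ih =>
    rw [wordMap_cons, image_comp]
    exact (image_mono ih).trans ((subset_iUnion (fun i => f i '' K) i).trans hK.symm.subset)

theorem image_wordMap_subset_of_prefix (hK : K = ⋃ i, f i '' K) (h : A <+: I) :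
    wordMap f I '' K ⊆ wordMap f A '' K := by
  obtain ⟨L, rfl⟩ := h
  rw [wordMap_append, image_comp]
  exact image_mono (image_wordMap_subset hK L)

theorem exists_mem_image_wordMap (hK : K = ⋃ i, f i '' K) (n : ℕ) {x : 𝔼 d} (hx : x ∈ K) :
    ∃ I : List (Fin m), I.length = n ∧ x ∈ wordMap f I '' K := by
  induction n generalizing x with
  | zero => exact ⟨[], rfl, by simpa using hx⟩
  | succ n ih =>
    rw [hK] at hx
    obtain ⟨i, y, hy, rfl⟩ := mem_iUnion.1 hx
    obtain ⟨I, hI, z, hz, rfl⟩ := ih hy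
    exact ⟨i :: I, by simp [hI], z, hz, rfl⟩

theorem finite_inter_of_not_prefix (hr : ∀ i, 0 < r i)
    (hsim : ∀ i x y, dist (f i x) (f i y) = r i * dist x y) (hK : K = ⋃ i, f i '' K)
    (hfin : ∀ i j : Fin m, i < j → (f i '' K ∩ f j '' K).Finite) (h₁ : ¬I <+: J)
    (h₂ : ¬J <+: I) : (wordMap f I '' K ∩ wordMap f J '' K).Finite := by
  induction I generalizing J with
  | nil => exact absurd List.nil_prefix h₁
  | cons i I ih =>
    cases J with
    | nil => exact absurd List.nil_prefix h₂
    | cons j J =>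
      rw [wordMap_cons, wordMap_cons, image_comp, image_comp]
      obtain rfl | hij := eq_or_ne i j
      · rw [← image_inter (injective_of_dist_eq_mul (hr i).ne' (hsim i))]
        simp only [List.cons_prefix_cons, true_and] at h₁ h₂
        exact (ih h₁ h₂).image _
      · refine Finite.subset ?_ (inter_subset_inter (image_mono (image_wordMap_subset hK I))
          (image_mono (image_wordMap_subset hK J)))
        rcases hij.lt_or_gt with h | h
        · exact hfin i j h
        · rw [inter_comm]
          exact hfin j i h

end Words

section Stopping

variable {r : Fin m → ℝ} {f : Fin m → 𝔼 d → 𝔼 d} {K : Set (𝔼 d)} {rmin t : ℝ}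
  {I J A : List (Fin m)}

def IsStopping (r : Fin m → ℝ) (t : ℝ) (I : List (Fin m)) : Prop :=
  wordRatio r I ≤ t ∧ ∀ J, J <+: I → J ≠ I → t < wordRatio r J

theorem IsStopping.eq_of_prefix (hI : IsStopping r t I) (hJ : IsStopping r t J) (h : I <+: J) :
    I = J :=
  by_contra fun hne => lt_irrefl _ ((hJ.2 I h hne).trans_le hI.1)

theorem IsStopping.eq_nil (ht : 1 ≤ t) (hI : IsStopping r t I) : I = [] :=
  by_contra fun hne => by
    have h := ht.trans_lt (hI.2 [] List.nil_prefix (Ne.symm hne))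
    simp at h

theorem IsStopping.mul_lt_wordRatio_of_ne_nil (hrmin0 : 0 < rmin) (hrmin : ∀ i, rmin ≤ r i)
    (hI : IsStopping r t I) (hne : I ≠ []) : t * rmin < wordRatio r I := by
  rw [← List.dropLast_append_getLast hne] at hI ⊢
  have hJ := hI.2 _ (List.prefix_append _ _) (by simp)
  rw [wordRatio_append, wordRatio_cons, wordRatio_nil, mul_one]
  calc t * rmin < wordRatio r I.dropLast * rmin := mul_lt_mul_of_pos_right hJ hrmin0
    _ ≤ wordRatio r I.dropLast * r (I.getLast hne) :=
      mul_le_mul_of_nonneg_left (hrmin _)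
        (wordRatio_pos (fun i => hrmin0.trans_le (hrmin i)) _).le

theorem IsStopping.mul_lt_wordRatio_of_mul_lt_one (hrmin0 : 0 < rmin) (hrmin : ∀ i, rmin ≤ r i)
    (hI : IsStopping r t I) (ht : t * rmin < 1) : t * rmin < wordRatio r I := by
  obtain rfl | hne := eq_or_ne I []
  · simpa using ht
  · exact hI.mul_lt_wordRatio_of_ne_nil hrmin0 hrmin hne

theorem IsStopping.mul_wordRatio_le (hrmin0 : 0 < rmin) (hrmin1 : rmin ≤ 1)
    (hrmin : ∀ i, rmin ≤ r i) (hI : IsStopping r t I) (hJ : IsStopping r t J) :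
    rmin * wordRatio r I ≤ wordRatio r J := by
  obtain rfl | hIJ := eq_or_ne I J
  · exact mul_le_of_le_one_left (wordRatio_pos (fun i => hrmin0.trans_le (hrmin i)) I).le hrmin1
  have hJne : J ≠ [] := fun h => hIJ (hJ.eq_of_prefix hI (h ▸ List.nil_prefix)).symm
  calc rmin * wordRatio r I ≤ t * rmin := by
        rw [mul_comm]
        exact mul_le_mul_of_nonneg_right hI.1 hrmin0.le
    _ ≤ wordRatio r J := (hJ.mul_lt_wordRatio_of_ne_nil hrmin0 hrmin hJne).le

theorem IsStopping.mul_le_wordRatio_mul (hrmin0 : 0 < rmin) (hrmin1 : rmin < 1)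
    (hrmin : ∀ i, rmin ≤ r i) (hI : IsStopping r t I) (ht : 0 < t) (ht1 : t < 1) {c ε D : ℝ}
    (hc : c ≤ rmin * ε) (hε : 0 ≤ ε) (hD : ε ≤ D) : c * t ≤ wordRatio r I * D :=
  calc c * t ≤ t * rmin * ε := by
        rw [mul_comm t, mul_right_comm]
        exact mul_le_mul_of_nonneg_right hc ht.le
    _ ≤ wordRatio r I * D := mul_le_mul
        (hI.mul_lt_wordRatio_of_mul_lt_one hrmin0 hrmin
          (mul_lt_one_of_nonneg_of_lt_one_left ht.le ht1 hrmin1.le)).le hD hε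
        (wordRatio_pos (fun i => hrmin0.trans_le (hrmin i)) I).le

theorem exists_prefix_mem_stopping (h : wordRatio r I ≤ t) :
    ∃ A, A <+: I ∧ IsStopping r t A := by
  classical
  have hex : ∃ n, wordRatio r (I.take n) ≤ t := ⟨I.length, by rwa [List.take_length]⟩
  refine ⟨I.take (Nat.find hex), List.take_prefix _ _, Nat.find_spec hex, fun J hJ hne => ?_⟩
  have hlt : J.length < Nat.find hex :=
    (hJ.length_le.lt_of_ne fun h => hne (hJ.eq_of_length h)).trans_le (List.length_take_le _ _)
  rw [List.prefix_iff_eq_take.1 hJ, List.take_take, min_eq_left hlt.le]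
  exact not_le.1 (Nat.find_min hex hlt)

theorem exists_mem_stopping_of_mem (hr : ∀ i, 0 < r i ∧ r i < 1) (hK : K = ⋃ i, f i '' K)
    (ht : 0 < t) {x : 𝔼 d} (hx : x ∈ K) : ∃ I, IsStopping r t I ∧ x ∈ wordMap f I '' K := by
  obtain ⟨q, -, hq1, hq⟩ := exists_pos_lt_one_forall_le fun i => (hr i).2
  obtain ⟨n, hn⟩ := exists_pow_lt_of_lt_one ht hq1
  obtain ⟨I, rfl, hxI⟩ := exists_mem_image_wordMap hK n hx
  obtain ⟨A, hAI, hA⟩ :=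
    exists_prefix_mem_stopping ((wordRatio_le_pow (fun i => (hr i).1) hq I).trans hn.le)
  exact ⟨A, hA, image_wordMap_subset_of_prefix hK hAI hxI⟩

theorem IsStopping.sq_lt_wordRatio_of_append (hrmin0 : 0 < rmin) (hrmin1 : rmin < 1)
    (hrmin : ∀ i, rmin ≤ r i) (ht : t < 1) {a : List (Fin m)} (hI : IsStopping r t (A ++ a))
    (hA : IsStopping r (t / rmin) A) : rmin ^ 2 < wordRatio r a := by
  have hr : ∀ i, 0 < r i := fun i => hrmin0.trans_le (hrmin i)
  have hIlb := hI.mul_lt_wordRatio_of_mul_lt_one hrmin0 hrmin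
    ((mul_lt_of_lt_one_left hrmin0 ht).trans hrmin1)
  rw [wordRatio_append] at hIlb
  by_contra! ha
  have := mul_le_mul hA.1 ha (wordRatio_pos hr a).le ((wordRatio_pos hr A).le.trans hA.1)
  have : t / rmin * rmin ^ 2 = t * rmin := by field_simp
  linarith

end Stopping

section NeighborMaps

variable {r : Fin m → ℝ} {f : Fin m → 𝔼 d → 𝔼 d} {K : Set (𝔼 d)} {rmin t : ℝ}
  {I J : List (Fin m)}

/-- The map `f_I⁻¹ ∘ f_J`. -/
noncomputable def neighborMap (f : Fin m → 𝔼 d → 𝔼 d) (I J : List (Fin m)) : 𝔼 d → 𝔼 d :=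
  invFun (wordMap f I) ∘ wordMap f J

def neighborMaps (f : Fin m → 𝔼 d → 𝔼 d) (rmin : ℝ) (K : Set (𝔼 d)) : Set (𝔼 d → 𝔼 d) :=
  insert id (NeighborSet f rmin K 0)

theorem continuous_of_mem_neighborMaps {h : 𝔼 d → 𝔼 d} (hh : h ∈ neighborMaps f rmin K) :
    Continuous h := by
  obtain rfl | ⟨-, -, ⟨ρ, -, -, hρ⟩, -⟩ := hh
  · exact continuous_id
  · exact continuous_of_dist_eq_mul hρ

section

variable (hr : ∀ i, 0 < r i) (hsim : ∀ i x y, dist (f i x) (f i y) = r i * dist x y)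
include hr hsim

theorem wordMap_injective (I : List (Fin m)) : Injective (wordMap f I) :=
  injective_of_dist_eq_mul (wordRatio_pos hr I).ne' (dist_wordMap hsim I)

theorem wordMap_comp_neighborMap (I J : List (Fin m)) :
    wordMap f I ∘ neighborMap f I J = wordMap f J :=
  funext fun _ => invFun_eq (surjective_of_dist_eq_mul (wordRatio_pos hr I) (dist_wordMap hsim I) _)

theorem neighborMap_apply_of_wordMap_eq {a b : 𝔼 d} (h : wordMap f I a = wordMap f J b) :
    neighborMap f I J b = a := by
  rw [neighborMap, comp_apply, ← h, leftInverse_invFun (wordMap_injective hr hsim I)]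

theorem dist_neighborMap (I J : List (Fin m)) (x y : 𝔼 d) :
    dist (neighborMap f I J x) (neighborMap f I J y) =
      wordRatio r J / wordRatio r I * dist x y := by
  have h := dist_wordMap hsim I (neighborMap f I J x) (neighborMap f I J y)
  simp only [← comp_apply (f := wordMap f I), wordMap_comp_neighborMap hr hsim,
    dist_wordMap hsim] at h
  rw [div_mul_eq_mul_div, eq_div_iff (wordRatio_pos hr I).ne', h, mul_comm]

theorem image_wordMap_inter_neighborMap (I J : List (Fin m)) :
    wordMap f I '' (K ∩ neighborMap f I J '' K) = wordMap f I '' K ∩ wordMap f J '' K := by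
  rw [image_inter (wordMap_injective hr hsim I), ← image_comp, wordMap_comp_neighborMap hr hsim]

theorem finite_inter_neighborMap (hK : K = ⋃ i, f i '' K)
    (hfin : ∀ i j : Fin m, i < j → (f i '' K ∩ f j '' K).Finite) (hI : IsStopping r t I)
    (hJ : IsStopping r t J) (hIJ : I ≠ J) : (K ∩ neighborMap f I J '' K).Finite := by
  have h := finite_inter_of_not_prefix hr hsim hK hfin (fun h => hIJ (hI.eq_of_prefix hJ h))
    (fun h => hIJ (hJ.eq_of_prefix hI h).symm)
  rw [← image_wordMap_inter_neighborMap hr hsim] at h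
  exact h.of_finite_image (wordMap_injective hr hsim I).injOn

end

theorem neighborMap_mem_neighborMaps (hsim : ∀ i x y, dist (f i x) (f i y) = r i * dist x y)
    (hK : IsClosed K) (hrmin0 : 0 < rmin) (hrmin1 : rmin ≤ 1) (hrmin : ∀ i, rmin ≤ r i)
    (hI : IsStopping r t I) (hJ : IsStopping r t J)
    (hIJ : (wordMap f I '' K ∩ wordMap f J '' K).Nonempty) :
    neighborMap f I J ∈ neighborMaps f rmin K := by
  have hr : ∀ i, 0 < r i := fun i => hrmin0.trans_le (hrmin i)
  by_cases hid : neighborMap f I J = id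
  · exact mem_insert_iff.2 (Or.inl hid)
  have hIpos := wordRatio_pos hr I
  refine mem_insert_iff.2 <| Or.inr ⟨⟨I, J, wordMap_comp_neighborMap hr hsim I J⟩, hid,
    ⟨wordRatio r J / wordRatio r I, ?_, ?_, dist_neighborMap hr hsim I J⟩, ?_⟩
  · rw [le_div_iff₀ hIpos]
    exact hI.mul_wordRatio_le hrmin0 hrmin1 hrmin hJ
  · rw [div_le_iff₀ hIpos, le_inv_mul_iff₀ hrmin0]
    exact hJ.mul_wordRatio_le hrmin0 hrmin1 hrmin hI
  · obtain ⟨-, ⟨a, ha, hab⟩, b, hb, rfl⟩ := hIJ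
    rw [cthickening_zero, hK.closure_eq]
    exact ⟨a, ha, b, hb, neighborMap_apply_of_wordMap_eq hr hsim hab⟩

theorem exists_preimage_of_mem_inter (hsim : ∀ i x y, dist (f i x) (f i y) = r i * dist x y)
    (hK : K = ⋃ i, f i '' K) (hKc : IsClosed K)
    (hfin : ∀ i j : Fin m, i < j → (f i '' K ∩ f j '' K).Finite) (hrmin0 : 0 < rmin)
    (hrmin1 : rmin ≤ 1) (hrmin : ∀ i, rmin ≤ r i) (hI : IsStopping r t I)
    (hJ : IsStopping r t J) (hIJ : I ≠ J) {p : 𝔼 d}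
    (hp : p ∈ wordMap f I '' K ∩ wordMap f J '' K) :
    ∃ g ∈ neighborMaps f rmin K, (K ∩ g '' K).Finite ∧ ∃ u ∈ K ∩ g '' K, wordMap f I u = p := by
  have hr : ∀ i, 0 < r i := fun i => hrmin0.trans_le (hrmin i)
  refine ⟨_, neighborMap_mem_neighborMaps hsim hKc hrmin0 hrmin1 hrmin hI hJ ⟨p, hp⟩,
    finite_inter_neighborMap hr hsim hK hfin hI hJ hIJ, ?_⟩
  rwa [← image_wordMap_inter_neighborMap hr hsim] at hp

end NeighborMaps

section Separation

variable {r : Fin m → ℝ} {f : Fin m → 𝔼 d → 𝔼 d} {K : Set (𝔼 d)} {rmin t : ℝ}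
  {I J : List (Fin m)} {x : 𝔼 d}

theorem IsStopping.not_disjoint_of_one_le (ht : 1 ≤ t) (hI : IsStopping r t I)
    (hJ : IsStopping r t J) (hx : x ∈ wordMap f I '' K) :
    ¬Disjoint (wordMap f I '' K) (wordMap f J '' K) := by
  obtain rfl := hI.eq_nil ht
  obtain rfl := hJ.eq_nil ht
  exact fun hd => disjoint_left.1 hd hx hx

theorem exists_sep_short_configs (hr : ∀ i, 0 < r i ∧ r i < 1)
    (hsim : ∀ i x y, dist (f i x) (f i y) = r i * dist x y) (hKc : IsCompact K)
    (hft : (NeighborSet f rmin K 0).Finite) (hrmin0 : 0 < rmin) :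
    ∃ γ > 0, ∀ a b : List (Fin m), ∀ h ∈ neighborMaps f rmin K,
      rmin ^ 2 < wordRatio r a → rmin ^ 2 < wordRatio r b →
      Disjoint (wordMap f a '' K) (h '' (wordMap f b '' K)) →
      ∀ x ∈ wordMap f a '' K, ∀ y ∈ h '' (wordMap f b '' K), γ ≤ dist x y := by
  have hW := finite_setOf_lt_wordRatio hr (pow_pos hrmin0 2)
  have hcont (I : List (Fin m)) : Continuous (wordMap f I) :=
    continuous_of_dist_eq_mul (dist_wordMap hsim I)
  obtain ⟨γ, hγ, hsep⟩ := exists_pos_le_dist_of_finite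
    (S := {c ∈ {a | rmin ^ 2 < wordRatio r a} ×ˢ neighborMaps f rmin K ×ˢ
      {a | rmin ^ 2 < wordRatio r a} |
        Disjoint (wordMap f c.1 '' K) (c.2.1 '' (wordMap f c.2.2 '' K))})
    (A := fun c => wordMap f c.1 '' K) (B := fun c => c.2.1 '' (wordMap f c.2.2 '' K))
    ((hW.prod ((hft.insert id).prod hW)).subset (sep_subset _ _))
    (fun c _ => hKc.image (hcont c.1))
    (fun c hc =>
      ((hKc.image (hcont c.2.2)).image (continuous_of_mem_neighborMaps hc.1.2.1)).isClosed)
    (fun c hc => hc.2)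
  exact ⟨γ, hγ, fun a b h hh ha hb hd => hsep (a, h, b) ⟨⟨ha, hh, hb⟩, hd⟩⟩

theorem exists_config_of_not_disjoint (hsim : ∀ i x y, dist (f i x) (f i y) = r i * dist x y)
    (hK : IsClosed K) (hrmin0 : 0 < rmin) (hrmin1 : rmin ≤ 1) (hrmin : ∀ i, rmin ≤ r i)
    {A B a b : List (Fin m)} (hA : IsStopping r t A) (hB : IsStopping r t B)
    (hAB : (wordMap f A '' K ∩ wordMap f B '' K).Nonempty)
    (hd : Disjoint (wordMap f (A ++ a) '' K) (wordMap f (B ++ b) '' K)) {y : 𝔼 d}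
    (hx : x ∈ wordMap f (A ++ a) '' K) (hy : y ∈ wordMap f (B ++ b) '' K) :
    ∃ h ∈ neighborMaps f rmin K, Disjoint (wordMap f a '' K) (h '' (wordMap f b '' K)) ∧
      ∃ x' ∈ wordMap f a '' K, ∃ y' ∈ h '' (wordMap f b '' K),
        dist x y = wordRatio r A * dist x' y' := by
  have hr : ∀ i, 0 < r i := fun i => hrmin0.trans_le (hrmin i)
  have hxA : wordMap f (A ++ a) '' K = wordMap f A '' (wordMap f a '' K) := by
    rw [wordMap_append, image_comp]
  have hyA : wordMap f (B ++ b) '' K =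
      wordMap f A '' (neighborMap f A B '' (wordMap f b '' K)) := by
    rw [wordMap_append, ← wordMap_comp_neighborMap hr hsim A B, image_comp, image_comp]
  rw [hxA] at hx hd
  rw [hyA] at hy hd
  obtain ⟨x', hx', rfl⟩ := hx
  obtain ⟨y', hy', rfl⟩ := hy
  exact ⟨_, neighborMap_mem_neighborMaps hsim hK hrmin0 hrmin1 hrmin hA hB hAB,
    (disjoint_image_iff (wordMap_injective hr hsim A)).1 hd, x', hx', y', hy',
    dist_wordMap hsim A x' y'⟩

theorem exists_sep_disjoint_pieces (hr : ∀ i, 0 < r i ∧ r i < 1)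
    (hsim : ∀ i x y, dist (f i x) (f i y) = r i * dist x y) (hK : K = ⋃ i, f i '' K)
    (hKc : IsCompact K) (hft : (NeighborSet f rmin K 0).Finite) (hrmin0 : 0 < rmin)
    (hrmin1 : rmin < 1) (hrmin : ∀ i, rmin ≤ r i) :
    ∃ γ > 0, ∀ t > 0, ∀ I J, IsStopping r t I → IsStopping r t J →
      Disjoint (wordMap f I '' K) (wordMap f J '' K) →
      ∀ x ∈ wordMap f I '' K, ∀ y ∈ wordMap f J '' K, γ * t ≤ dist x y := by
  obtain ⟨γ, hγ0, hγ⟩ := exists_sep_short_configs hr hsim hKc hft hrmin0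
  refine ⟨γ, hγ0, fun t ht => ?_⟩
  obtain ⟨n, hn⟩ := exists_pow_lt_of_lt_one ht hrmin1
  induction n generalizing t with
  | zero =>
    intro I J hI hJ hd x hx
    exact absurd hd (hI.not_disjoint_of_one_le (by simpa using hn.le) hJ hx)
  | succ n ih =>
    intro I J hI hJ hd x hx y hy
    obtain h1 | h1 := le_or_gt 1 t
    · exact absurd hd (hI.not_disjoint_of_one_le h1 hJ hx)
    -- pass to the ancestors `A`, `B` of `I`, `J` at scale `t / rmin`
    have htu : t ≤ t / rmin := le_div_self ht.le hrmin0 hrmin1.le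
    obtain ⟨A, ⟨a, rfl⟩, hA⟩ := exists_prefix_mem_stopping (hI.1.trans htu)
    obtain ⟨B, ⟨b, rfl⟩, hB⟩ := exists_prefix_mem_stopping (hJ.1.trans htu)
    by_cases hAB : Disjoint (wordMap f A '' K) (wordMap f B '' K)
    · have hn' : rmin ^ n < t / rmin := by rwa [lt_div_iff₀ hrmin0, ← pow_succ]
      calc γ * t ≤ γ * (t / rmin) := mul_le_mul_of_nonneg_left htu hγ0.le
        _ ≤ dist x y := ih (t / rmin) (ht.trans_le htu) hn' A B hA hB hAB x
          (image_wordMap_subset_of_prefix hK (List.prefix_append _ _) hx) y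
          (image_wordMap_subset_of_prefix hK (List.prefix_append _ _) hy)
    obtain ⟨h, hh, hdisj, x', hx', y', hy', hxy⟩ := exists_config_of_not_disjoint hsim
      hKc.isClosed hrmin0 hrmin1.le hrmin hA hB (not_disjoint_iff_nonempty_inter.1 hAB) hd hx hy
    have hAt : t < wordRatio r A := by
      have h := hA.mul_lt_wordRatio_of_mul_lt_one hrmin0 hrmin
        (by rwa [div_mul_cancel₀ _ hrmin0.ne'])
      rwa [div_mul_cancel₀ _ hrmin0.ne'] at h
    calc γ * t ≤ wordRatio r A * γ := by
          rw [mul_comm]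
          exact mul_le_mul_of_nonneg_right hAt.le hγ0.le
      _ ≤ wordRatio r A * dist x' y' := mul_le_mul_of_nonneg_left
          (hγ a b h hh (hI.sq_lt_wordRatio_of_append hrmin0 hrmin1 hrmin h1 hA)
            (hJ.sq_lt_wordRatio_of_append hrmin0 hrmin1 hrmin h1 hB) hdisj x' hx' y' hy')
          (wordRatio_pos (fun i => (hr i).1) A).le
      _ = dist x y := hxy.symm

def junctions (f : Fin m → 𝔼 d → 𝔼 d) (r : Fin m → ℝ) (K : Set (𝔼 d)) (t : ℝ) : Set (𝔼 d) :=
  {z | ∃ I J, IsStopping r t I ∧ IsStopping r t J ∧ I ≠ J ∧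
    z ∈ wordMap f I '' K ∩ wordMap f J '' K}

theorem exists_sep_neighbor_images (hft : (NeighborSet f rmin K 0).Finite) :
    ∃ δ > 0, ∀ g ∈ neighborMaps f rmin K, ∀ g' ∈ neighborMaps f rmin K,
      ∀ h ∈ neighborMaps f rmin K, (K ∩ g '' K).Finite → (K ∩ g' '' K).Finite →
      ∀ u ∈ K ∩ g '' K, ∀ w ∈ K ∩ g' '' K, u ≠ h w → δ ≤ dist u (h w) := by
  set G := ⋃ g ∈ {g ∈ neighborMaps f rmin K | (K ∩ g '' K).Finite}, K ∩ g '' K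
  set F := ⋃ h ∈ neighborMaps f rmin K, h '' G
  have hF : F.Finite := (hft.insert id).biUnion fun h _ =>
    (((hft.insert id).subset (sep_subset _ _)).biUnion fun _ hg => hg.2).image h
  obtain ⟨δ, hδ0, hδ⟩ := exists_pos_le_dist_of_finite (S := {pq ∈ F ×ˢ F | pq.1 ≠ pq.2})
    (A := fun pq => {pq.1}) (B := fun pq => {pq.2}) ((hF.prod hF).subset (sep_subset _ _))
    (fun _ _ => isCompact_singleton) (fun _ _ => isClosed_singleton)
    (fun _ hpq => disjoint_singleton.2 hpq.2)
  refine ⟨δ, hδ0, fun g hg g' hg' h hh hgfin hg'fin u hu w hw huw =>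
    hδ (u, h w) ⟨⟨?_, ?_⟩, huw⟩ u rfl (h w) rfl⟩
  · exact mem_biUnion (mem_insert id _) ⟨u, mem_biUnion (x := g) ⟨hg, hgfin⟩ hu, rfl⟩
  · exact mem_biUnion hh ⟨w, mem_biUnion (x := g') ⟨hg', hg'fin⟩ hw, rfl⟩

theorem exists_sep_junctions (hr : ∀ i, 0 < r i ∧ r i < 1)
    (hsim : ∀ i x y, dist (f i x) (f i y) = r i * dist x y) (hK : K = ⋃ i, f i '' K)
    (hKc : IsCompact K) (hft : (NeighborSet f rmin K 0).Finite)
    (hfin : ∀ i j : Fin m, i < j → (f i '' K ∩ f j '' K).Finite) (hrmin0 : 0 < rmin)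
    (hrmin1 : rmin < 1) (hrmin : ∀ i, rmin ≤ r i) :
    ∃ δ > 0, ∀ t, 0 < t → t < 1 → ∀ p ∈ junctions f r K t, ∀ q ∈ junctions f r K t,
      p ≠ q → δ * t ≤ dist p q := by
  have hr0 : ∀ i, 0 < r i := fun i => (hr i).1
  obtain ⟨γ, hγ0, hγ⟩ := exists_sep_disjoint_pieces hr hsim hK hKc hft hrmin0 hrmin1 hrmin
  obtain ⟨δ, hδ0, hδ⟩ := exists_sep_neighbor_images hft
  refine ⟨min γ (rmin * δ), by positivity, ?_⟩
  rintro t ht ht1 p ⟨I, J, hI, hJ, hIJ, hp⟩ q ⟨L, M, hL, hM, hLM, hq⟩ hpq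
  by_cases hIL : Disjoint (wordMap f I '' K) (wordMap f L '' K)
  · exact (mul_le_mul_of_nonneg_right (min_le_left _ _) ht.le).trans
      (hγ t ht I L hI hL hIL p hp.1 q hq.1)
  obtain ⟨g, hg, hgfin, u, hu, rfl⟩ := exists_preimage_of_mem_inter hsim hK hKc.isClosed hfin
    hrmin0 hrmin1.le hrmin hI hJ hIJ hp
  obtain ⟨g', hg', hg'fin, w, hw, rfl⟩ := exists_preimage_of_mem_inter hsim hK hKc.isClosed
    hfin hrmin0 hrmin1.le hrmin hL hM hLM hq
  have hh := neighborMap_mem_neighborMaps hsim hKc.isClosed hrmin0 hrmin1.le hrmin hI hL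
    (not_disjoint_iff_nonempty_inter.1 hIL)
  rw [← wordMap_comp_neighborMap hr0 hsim I L, comp_apply] at hpq ⊢
  rw [dist_wordMap hsim]
  have huw := hδ g hg g' hg' _ hh hgfin hg'fin u hu w hw fun he => hpq (congrArg _ he)
  exact hI.mul_le_wordRatio_mul hrmin0 hrmin1 hrmin ht ht1 (min_le_right _ _) hδ0.le huw

theorem exists_sep_off_inter (hKc : IsCompact K) (hft : (NeighborSet f rmin K 0).Finite)
    {β : ℝ} (hβ : 0 < β) :
    ∃ ψ > 0, ∀ h ∈ neighborMaps f rmin K, ∀ x ∈ K, ∀ y ∈ h '' K,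
      (∀ p ∈ K ∩ h '' K, β ≤ dist x p) → (∀ p ∈ K ∩ h '' K, β ≤ dist y p) → ψ ≤ dist x y := by
  have hfar (h : 𝔼 d → 𝔼 d) : IsClosed {x | ∀ p ∈ K ∩ h '' K, β ≤ dist x p} := by
    rw [show {x | ∀ p ∈ K ∩ h '' K, β ≤ dist x p} = ⋂ p ∈ K ∩ h '' K, {x | β ≤ dist x p} by
      ext; simp]
    exact isClosed_biInter fun _ _ =>
      isClosed_le continuous_const (continuous_id.dist continuous_const)
  obtain ⟨ψ, hψ0, hψ⟩ := exists_pos_le_dist_of_finite (hft.insert id)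
    (A := fun h => K ∩ {x | ∀ p ∈ K ∩ h '' K, β ≤ dist x p})
    (B := fun h => h '' K ∩ {x | ∀ p ∈ K ∩ h '' K, β ≤ dist x p})
    (fun h _ => hKc.inter_right (hfar h))
    (fun h hh => (hKc.image (continuous_of_mem_neighborMaps hh)).isClosed.inter (hfar h))
    (fun _ _ => disjoint_left.2 fun z hz hz' => (hz.2 z ⟨hz.1, hz'.1⟩).not_gt (by simpa using hβ))
  exact ⟨ψ, hψ0, fun h hh x hx y hy hxp hyp => hψ h hh x ⟨hx, hxp⟩ y ⟨hy, hyp⟩⟩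

theorem exists_sep_off_junctions (hr : ∀ i, 0 < r i ∧ r i < 1)
    (hsim : ∀ i x y, dist (f i x) (f i y) = r i * dist x y) (hK : K = ⋃ i, f i '' K)
    (hKc : IsCompact K) (hft : (NeighborSet f rmin K 0).Finite) (hrmin0 : 0 < rmin)
    (hrmin1 : rmin < 1) (hrmin : ∀ i, rmin ≤ r i) {β : ℝ} (hβ : 0 < β) :
    ∃ ψ > 0, ∀ t, 0 < t → t < 1 → ∀ I J, IsStopping r t I → IsStopping r t J → I ≠ J →
      ∀ x ∈ wordMap f I '' K, ∀ y ∈ wordMap f J '' K,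
      (∀ z ∈ junctions f r K t, β * t ≤ dist x z) →
      (∀ z ∈ junctions f r K t, β * t ≤ dist y z) → ψ * t ≤ dist x y := by
  have hr0 : ∀ i, 0 < r i := fun i => (hr i).1
  obtain ⟨γ, hγ0, hγ⟩ := exists_sep_disjoint_pieces hr hsim hK hKc hft hrmin0 hrmin1 hrmin
  obtain ⟨ψ, hψ0, hψ⟩ := exists_sep_off_inter hKc hft hβ
  refine ⟨min γ (rmin * ψ), by positivity, ?_⟩
  intro t ht ht1 I J hI hJ hIJ x hx y hy hxZ hyZ
  by_cases hd : Disjoint (wordMap f I '' K) (wordMap f J '' K)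
  · exact (mul_le_mul_of_nonneg_right (min_le_left _ _) ht.le).trans
      (hγ t ht I J hI hJ hd x hx y hy)
  set h := neighborMap f I J
  have hh := neighborMap_mem_neighborMaps hsim hKc.isClosed hrmin0 hrmin1.le hrmin hI hJ
    (not_disjoint_iff_nonempty_inter.1 hd)
  -- `f_I` maps `K ∩ h(K)` into the junctions
  have hpull (z : 𝔼 d) (hz : ∀ w ∈ junctions f r K t, β * t ≤ dist (wordMap f I z) w)
      (p : 𝔼 d) (hp : p ∈ K ∩ h '' K) : β ≤ dist z p :=
    le_dist_of_mul_le_dist_wordMap hr0 hsim hI.1 (hz _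
      ⟨I, J, hI, hJ, hIJ, image_wordMap_inter_neighborMap hr0 hsim I J ▸ mem_image_of_mem _ hp⟩)
  obtain ⟨x, hx, rfl⟩ := hx
  obtain ⟨y, hy, rfl⟩ := hy
  rw [← wordMap_comp_neighborMap hr0 hsim I J, comp_apply] at hyZ ⊢
  rw [dist_wordMap hsim]
  have hxy := hψ h hh x hx (h y) (mem_image_of_mem h hy) (hpull x hxZ) (hpull _ hyZ)
  exact hI.mul_le_wordRatio_mul hrmin0 hrmin1 hrmin ht ht1 (min_le_right _ _) hψ0.le hxy

end Separation

theorem exists_isSeparatedCover_of_lt_one {r : Fin m → ℝ} {f : Fin m → 𝔼 d → 𝔼 d}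
    {K : Set (𝔼 d)} {rmin : ℝ} (hr : ∀ i, 0 < r i ∧ r i < 1)
    (hsim : ∀ i x y, dist (f i x) (f i y) = r i * dist x y) (hK : K = ⋃ i, f i '' K)
    (hKc : IsCompact K) (hft : (NeighborSet f rmin K 0).Finite)
    (hfin : ∀ i j : Fin m, i < j → (f i '' K ∩ f j '' K).Finite) (hrmin0 : 0 < rmin)
    (hrmin1 : rmin < 1) (hrmin : ∀ i, rmin ≤ r i) (hD : 0 < diam K) :
    ∃ c > 0, ∀ t, 0 < t → t < 1 →
      ∃ 𝒰 : Fin 2 → Set (Set (𝔼 d)), IsSeparatedCover K (t * diam K) (c * t) 𝒰 := by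
  obtain ⟨δ, hδ0, hδ⟩ := exists_sep_junctions hr hsim hK hKc hft hfin hrmin0 hrmin1 hrmin
  set β := min (δ / 4) (diam K / 2)
  have hβδ : β ≤ δ / 4 := min_le_left _ _
  have hβD : β ≤ diam K / 2 := min_le_right _ _
  obtain ⟨ψ, hψ0, hψ⟩ :=
    exists_sep_off_junctions hr hsim hK hKc hft hrmin0 hrmin1 hrmin (by positivity : 0 < β)
  set c := min (δ / 2) ψ
  have hcδ : c ≤ δ / 2 := min_le_left _ _
  refine ⟨c, by positivity, fun t ht ht1 => ⟨_, isSeparatedCover_of_pieces (ρ := β * t)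
    (S := {I | IsStopping r t I}) (Z := junctions f r K t) (fun x hx => ?_) ?_ ?_
    (fun z hz z' hz' hzz' => le_trans ?_ (hδ t ht ht1 z hz z' hz' hzz'))
    (fun I hI J hJ hIJ x hx y hy hxZ hyZ =>
      le_trans ?_ (hψ t ht ht1 I J hI hJ hIJ x hx y hy hxZ hyZ))⟩⟩
  · obtain ⟨I, hI, hxI⟩ := exists_mem_stopping_of_mem hr hK ht hx
    exact mem_biUnion hI hxI
  · rintro I hI - ⟨x, hx, rfl⟩ - ⟨y, hy, rfl⟩
    rw [dist_wordMap hsim]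
    exact mul_le_mul hI.1 (dist_le_diam_of_mem hKc.isBounded hx hy) dist_nonneg ht.le
  · nlinarith
  · nlinarith
  · exact mul_le_mul_of_nonneg_right (min_le_right _ _) ht.le

end SelfSimilar

open SelfSimilar Metric

theorem nagataDim_le_one_of_finite_type_general {d m : ℕ}
    (f : Fin m → EuclideanSpace ℝ (Fin d) → EuclideanSpace ℝ (Fin d))
    (r : Fin m → ℝ) (hr : ∀ i, 0 < r i ∧ r i < 1)
    (hsim : ∀ i, ∀ x y, dist (f i x) (f i y) = r i * dist x y)
    (K : Set (EuclideanSpace ℝ (Fin d))) (hKc : IsCompact K)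
    (hKattr : K = ⋃ i, f i '' K)
    (rmin : ℝ) (hrmin : IsLeast (Set.range r) rmin)
    (hft : (NeighborSet f rmin K 0).Finite)
    (hfin : ∀ i j : Fin m, i < j → (f i '' K ∩ f j '' K).Finite) :
    ∃ c : ℝ, 0 < c ∧ ∀ s : ℝ, 0 < s →
      ∃ 𝒰 : Fin 2 → Set (Set (EuclideanSpace ℝ (Fin d))),
        (K ⊆ ⋃ i, ⋃₀ 𝒰 i) ∧
        (∀ i, ∀ U ∈ 𝒰 i, EMetric.diam U ≤ ENNReal.ofReal s) ∧
        (∀ i, ∀ U ∈ 𝒰 i, ∀ V ∈ 𝒰 i, U ≠ V → ∀ p ∈ U, ∀ q ∈ V, c * s ≤ dist p q) := by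
  obtain ⟨⟨i₀, rfl⟩, hle⟩ := hrmin
  have hrmin : ∀ i, r i₀ ≤ r i := fun i => hle ⟨i, rfl⟩
  obtain hD | hD := (diam_nonneg (s := K)).eq_or_lt
  · exact ⟨1, one_pos, fun s hs => ⟨_, isSeparatedCover_const hKc.isBounded (hD ▸ hs.le) _⟩⟩
  obtain ⟨c, hc0, hc⟩ := exists_isSeparatedCover_of_lt_one hr hsim hKattr hKc hft hfin
    (hr i₀).1 (hr i₀).2 hrmin hD
  refine ⟨c / diam K, div_pos hc0 hD, fun s hs => ?_⟩
  obtain hsD | hsD := lt_or_ge s (diam K)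
  · obtain ⟨𝒰, h𝒰⟩ := hc (s / diam K) (div_pos hs hD) ((div_lt_one hD).2 hsD)
    rw [div_mul_cancel₀ s hD.ne', show c * (s / diam K) = c / diam K * s by ring] at h𝒰
    exact ⟨𝒰, h𝒰⟩
  · exact ⟨_, isSeparatedCover_const hKc.isBounded hsD _⟩

/-- Let `d ≥ 2` and let `K ⊆ ℝ^d` be the attractor of a self-similar IFS satisfying the
finite type condition and with `f_i(K) ∩ f_j(K)` finite for `i < j`. Then `K` has Nagata
dimension at most `1`: there is `c > 0` such that for every `s > 0` the set `K` has an
`s`-cover `𝒰₀ ∪ 𝒰₁` with each `𝒰_i` being `cs`-separated. -/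
theorem nagataDim_le_one_of_finite_type {d m : ℕ} (hd : 2 ≤ d)
    (f : Fin m → EuclideanSpace ℝ (Fin d) → EuclideanSpace ℝ (Fin d))
    (r : Fin m → ℝ) (hr : ∀ i, 0 < r i ∧ r i < 1)
    (hsim : ∀ i, ∀ x y, dist (f i x) (f i y) = r i * dist x y)
    (K : Set (EuclideanSpace ℝ (Fin d))) (hKne : K.Nonempty) (hKc : IsCompact K)
    (hKattr : K = ⋃ i, f i '' K)
    (rmin : ℝ) (hrmin : IsLeast (Set.range r) rmin)
    (hft : (NeighborSet f rmin K 0).Finite)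
    (hfin : ∀ i j : Fin m, i < j → (f i '' K ∩ f j '' K).Finite) :
    ∃ c : ℝ, 0 < c ∧ ∀ s : ℝ, 0 < s →
      ∃ 𝒰 : Fin 2 → Set (Set (EuclideanSpace ℝ (Fin d))),
        (K ⊆ ⋃ i, ⋃₀ 𝒰 i) ∧
        (∀ i, ∀ U ∈ 𝒰 i, EMetric.diam U ≤ ENNReal.ofReal s) ∧
        (∀ i, ∀ U ∈ 𝒰 i, ∀ V ∈ 𝒰 i, U ≠ V → ∀ p ∈ U, ∀ q ∈ V, c * s ≤ dist p q) :=
  nagataDim_le_one_of_finite_type_general f r hr hsim K hKc hKattr rmin hrmin hft hfin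
end
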